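/- arXiv:0904.0949 — 8 statements merged into one kernel-verified Lean document; each statement's English description precedes it below -/
import Mathlib

section
/- Let β, γ, p be positive constants with βγ = p. Then there exist constants 0 < c₁ ≤ c₂ < ∞ such that for all A ∈ (0,1), c₁ · log(1 + A^{-1/γ}) ≤ ∫₀¹ r^{p-1} / (A + r^γ)^β dr ≤ c₂ · log(1 + A^{-1/γ}). -/
/-! With `B = A ^ β` and `p = β γ`, the denominator `(A + r ^ γ) ^ β` is comparable, up to the
factors `2 ^ β` and `2`, to `B + r ^ p`, since `(r ^ γ) ^ β = r ^ p`. Against `B + r ^ p` the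
integral is explicit: `r ^ (p - 1) / (B + r ^ p)` is the derivative of `p⁻¹ log (B + r ^ p)`, so
it equals `p⁻¹ log (1 + B⁻¹)`. Finally `B⁻¹ = x ^ p` for `x = A ^ (-1/γ) ≥ 1`, and
`log (1 + x ^ p)` is comparable to `log (1 + x)` with constants `min 1 p` and `max 1 p`. -/

open MeasureTheory Set Real

lemma rpow_add_le_two_rpow_mul_add_rpow {x y β : ℝ} (hx : 0 ≤ x) (hy : 0 ≤ y) (hβ : 0 ≤ β) :
    (x + y) ^ β ≤ 2 ^ β * (x ^ β + y ^ β) := by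
  wlog hxy : x ≤ y generalizing x y
  · simpa only [add_comm] using this hy hx (le_of_not_ge hxy)
  calc (x + y) ^ β ≤ (2 * y) ^ β := by gcongr; linarith
    _ = 2 ^ β * y ^ β := mul_rpow zero_le_two hy
    _ ≤ 2 ^ β * (x ^ β + y ^ β) := by gcongr; exact le_add_of_nonneg_left (rpow_nonneg hx β)

lemma add_rpow_le_two_mul_rpow_add {x y β : ℝ} (hx : 0 ≤ x) (hy : 0 ≤ y) (hβ : 0 ≤ β) :
    x ^ β + y ^ β ≤ 2 * (x + y) ^ β := by
  have hxβ := rpow_le_rpow hx (le_add_of_nonneg_right hy) hβ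
  have hyβ := rpow_le_rpow hy (le_add_of_nonneg_left hx) hβ
  linarith

lemma min_one_mul_log_one_add_le {x q : ℝ} (hx : 1 ≤ x) (hq : 0 ≤ q) :
    min 1 q * log (1 + x) ≤ log (1 + x ^ q) := by
  rcases le_total q 1 with hq1 | hq1
  · rw [min_eq_right hq1, ← log_rpow (by linarith)]
    refine log_le_log (by positivity) ?_
    simpa only [one_rpow] using rpow_add_le_add_rpow zero_le_one (by linarith) hq hq1
  · rw [min_eq_left hq1, one_mul]
    exact log_le_log (by linarith) (by linarith [self_le_rpow_of_one_le hx hq1])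

lemma log_one_add_rpow_le_max_one_mul {x q : ℝ} (hx : 1 ≤ x) :
    log (1 + x ^ q) ≤ max 1 q * log (1 + x) := by
  rcases le_total q 1 with hq1 | hq1
  · rw [max_eq_left hq1, one_mul]
    exact log_le_log (by positivity) (by linarith [rpow_le_self_of_one_le hx hq1])
  · rw [max_eq_right hq1, ← log_rpow (by linarith)]
    refine log_le_log (by positivity) ?_
    simpa only [one_rpow] using add_rpow_le_rpow_add zero_le_one (by linarith) hq1

lemma integrableOn_rpow_sub_one_div {p c : ℝ} {D : ℝ → ℝ} (hp : 0 < p) (hc : 0 < c)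
    (hD : Measurable D) (hDc : ∀ r ∈ Ioo (0 : ℝ) 1, c ≤ D r) :
    IntegrableOn (fun r ↦ r ^ (p - 1) / D r) (Ioo 0 1) := by
  have hbound : IntegrableOn (fun r : ℝ ↦ r ^ (p - 1) / c) (Ioo 0 1) :=
    ((intervalIntegral.integrableOn_Ioo_rpow_iff one_pos).2 (by linarith)).div_const c
  refine hbound.mono' ((measurable_id.pow_const _).div hD).aestronglyMeasurable ?_
  filter_upwards [ae_restrict_mem measurableSet_Ioo] with r hr
  have hr0 := rpow_nonneg hr.1.le (p - 1)
  have hcD := hDc r hr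
  rw [norm_of_nonneg (div_nonneg hr0 (hc.le.trans hcD))]
  exact div_le_div_of_nonneg_left hr0 hc hcD

lemma integral_rpow_sub_one_div_add_rpow {p B : ℝ} (hp : 0 < p) (hB : 0 < B) :
    ∫ r in Ioo (0 : ℝ) 1, r ^ (p - 1) / (B + r ^ p) = p⁻¹ * log (1 + B⁻¹) := by
  have hpos : ∀ r : ℝ, 0 ≤ r → 0 < B + r ^ p := fun r hr ↦
    add_pos_of_pos_of_nonneg hB (rpow_nonneg hr p)
  have hFTC : ∫ r in (0 : ℝ)..1, r ^ (p - 1) / (B + r ^ p) =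
      p⁻¹ * log (B + (1 : ℝ) ^ p) - p⁻¹ * log (B + (0 : ℝ) ^ p) := by
    refine intervalIntegral.integral_eq_sub_of_hasDerivAt_of_le
      (f := fun r ↦ p⁻¹ * log (B + r ^ p)) zero_le_one ?_ (fun r hr ↦ ?_) ?_
    · refine continuousOn_const.mul (ContinuousOn.log ?_ fun r hr ↦ (hpos r hr.1).ne')
      exact continuousOn_const.add (continuousOn_id.rpow_const fun _ _ ↦ Or.inr hp.le)
    · have hlog := (((hasDerivAt_rpow_const (Or.inl hr.1.ne')).const_add B).log
        (hpos r hr.1.le).ne').const_mul p⁻¹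
      rwa [mul_div_assoc, inv_mul_cancel_left₀ hp.ne'] at hlog
    · rw [intervalIntegrable_iff_integrableOn_Ioo_of_le zero_le_one]
      exact integrableOn_rpow_sub_one_div hp hB (by fun_prop) fun r hr ↦
        le_add_of_nonneg_right (rpow_nonneg hr.1.le p)
  rw [intervalIntegral.integral_of_le zero_le_one, integral_Ioc_eq_integral_Ioo] at hFTC
  rw [hFTC, one_rpow, zero_rpow hp.ne', add_zero, ← mul_sub, ← log_div (by positivity) hB.ne',
    add_div, div_self hB.ne', one_div]

lemma integral_rpow_sub_one_div_add_rpow_rpow_bounds {A β γ : ℝ} (hA : 0 < A) (hβ : 0 < β)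
    (hγ : 0 < γ) :
    (2 ^ β)⁻¹ * ((β * γ)⁻¹ * log (1 + (A ^ β)⁻¹)) ≤
        ∫ r in Ioo (0 : ℝ) 1, r ^ (β * γ - 1) / (A + r ^ γ) ^ β ∧
      ∫ r in Ioo (0 : ℝ) 1, r ^ (β * γ - 1) / (A + r ^ γ) ^ β ≤
        2 * ((β * γ)⁻¹ * log (1 + (A ^ β)⁻¹)) := by
  have hp : 0 < β * γ := mul_pos hβ hγ
  have hB : 0 < A ^ β := rpow_pos_of_pos hA β
  have hpow : ∀ r : ℝ, 0 ≤ r → (r ^ γ) ^ β = r ^ (β * γ) := fun r hr ↦ by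
    rw [← rpow_mul hr, mul_comm]
  have hf_int : IntegrableOn (fun r ↦ r ^ (β * γ - 1) / (A + r ^ γ) ^ β) (Ioo 0 1) :=
    integrableOn_rpow_sub_one_div hp hB (by fun_prop) fun r hr ↦
      rpow_le_rpow hA.le (le_add_of_nonneg_right (rpow_nonneg hr.1.le γ)) hβ.le
  have hg_int : IntegrableOn (fun r ↦ r ^ (β * γ - 1) / (A ^ β + r ^ (β * γ))) (Ioo 0 1) :=
    integrableOn_rpow_sub_one_div hp hB (by fun_prop) fun r hr ↦
      le_add_of_nonneg_right (rpow_nonneg hr.1.le _)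
  rw [← integral_rpow_sub_one_div_add_rpow hp hB, ← integral_const_mul, ← integral_const_mul]
  constructor
  · refine setIntegral_mono_on (hg_int.const_mul _) hf_int measurableSet_Ioo fun r hr ↦ ?_
    have hden := rpow_add_le_two_rpow_mul_add_rpow hA.le (rpow_nonneg hr.1.le γ) hβ.le
    rw [hpow r hr.1.le] at hden
    calc (2 ^ β)⁻¹ * (r ^ (β * γ - 1) / (A ^ β + r ^ (β * γ)))
        = r ^ (β * γ - 1) / (2 ^ β * (A ^ β + r ^ (β * γ))) := by field_simp
      _ ≤ r ^ (β * γ - 1) / (A + r ^ γ) ^ β :=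
        div_le_div_of_nonneg_left (rpow_nonneg hr.1.le _)
          (rpow_pos_of_pos (by linarith [rpow_nonneg hr.1.le γ]) β) hden
  · refine setIntegral_mono_on hf_int (hg_int.const_mul _) measurableSet_Ioo fun r hr ↦ ?_
    have hden := add_rpow_le_two_mul_rpow_add hA.le (rpow_nonneg hr.1.le γ) hβ.le
    rw [hpow r hr.1.le] at hden
    have hg_den : 0 < A ^ β + r ^ (β * γ) :=
      add_pos_of_pos_of_nonneg hB (rpow_nonneg hr.1.le _)
    calc r ^ (β * γ - 1) / (A + r ^ γ) ^ β
        ≤ r ^ (β * γ - 1) / ((A ^ β + r ^ (β * γ)) / 2) :=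
          div_le_div_of_nonneg_left (rpow_nonneg hr.1.le _) (by positivity) (by linarith)
      _ = 2 * (r ^ (β * γ - 1) / (A ^ β + r ^ (β * γ))) := by field_simp

theorem stmt_1_general (β γ p : ℝ) (hβ : 0 < β) (hγ : 0 < γ)
    (h : β * γ = p) :
    ∃ c₁ c₂ : ℝ, 0 < c₁ ∧ c₁ ≤ c₂ ∧ ∀ A ∈ Ioo (0:ℝ) 1,
      c₁ * Real.log (1 + A ^ (-(1 / γ))) ≤
        (∫ r in Ioo (0:ℝ) 1, r ^ (p - 1) / (A + r ^ γ) ^ β) ∧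
      (∫ r in Ioo (0:ℝ) 1, r ^ (p - 1) / (A + r ^ γ) ^ β) ≤
        c₂ * Real.log (1 + A ^ (-(1 / γ))) := by
  subst h
  have hp : 0 < β * γ := mul_pos hβ hγ
  have h2β : 1 ≤ (2 : ℝ) ^ β := one_le_rpow one_le_two hβ.le
  refine ⟨(2 ^ β)⁻¹ * min 1 (β * γ) / (β * γ), 2 * max 1 (β * γ) / (β * γ), by positivity, ?_, ?_⟩
  · refine div_le_div_of_nonneg_right ?_ hp.le
    calc (2 ^ β)⁻¹ * min 1 (β * γ) ≤ 1 * max 1 (β * γ) :=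
          mul_le_mul (inv_le_one_of_one_le₀ h2β) min_le_max (by positivity) zero_le_one
      _ ≤ 2 * max 1 (β * γ) := by gcongr; norm_num
  rintro A ⟨hA0, hA1⟩
  set x := A ^ (-(1 / γ))
  have hx : 1 ≤ x := one_le_rpow_of_pos_of_le_one_of_nonpos hA0 hA1.le (by simp [hγ.le])
  have hxp : (A ^ β)⁻¹ = x ^ (β * γ) := by
    rw [← rpow_mul hA0.le, ← rpow_neg hA0.le]
    field_simp
  obtain ⟨hlow, hup⟩ := integral_rpow_sub_one_div_add_rpow_rpow_bounds hA0 hβ hγ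
  rw [hxp] at hlow hup
  have hlog_low := min_one_mul_log_one_add_le hx hp.le
  have hlog_up := log_one_add_rpow_le_max_one_mul (q := β * γ) hx
  constructor
  · calc (2 ^ β)⁻¹ * min 1 (β * γ) / (β * γ) * log (1 + x)
        = (2 ^ β)⁻¹ * ((β * γ)⁻¹ * (min 1 (β * γ) * log (1 + x))) := by ring
      _ ≤ (2 ^ β)⁻¹ * ((β * γ)⁻¹ * log (1 + x ^ (β * γ))) := by gcongr
      _ ≤ _ := hlow
  · calc _ ≤ 2 * ((β * γ)⁻¹ * log (1 + x ^ (β * γ))) := hup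
      _ ≤ 2 * ((β * γ)⁻¹ * (max 1 (β * γ) * log (1 + x))) := by gcongr
      _ = 2 * max 1 (β * γ) / (β * γ) * log (1 + x) := by ring

theorem stmt_1 (β γ p : ℝ) (hβ : 0 < β) (hγ : 0 < γ) (hp : 0 < p)
    (h : β * γ = p) :
    ∃ c₁ c₂ : ℝ, 0 < c₁ ∧ c₁ ≤ c₂ ∧ ∀ A ∈ Ioo (0:ℝ) 1,
      c₁ * Real.log (1 + A ^ (-(1 / γ))) ≤
        (∫ r in Ioo (0:ℝ) 1, r ^ (p - 1) / (A + r ^ γ) ^ β) ∧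
      (∫ r in Ioo (0:ℝ) 1, r ^ (p - 1) / (A + r ^ γ) ^ β) ≤
        c₂ * Real.log (1 + A ^ (-(1 / γ))) :=
  stmt_1_general β γ p hβ hγ h
end

section
/- Let β, γ, p be positive constants with γβ > p, where p ≥ 1 is an integer. Then there exists a constant c > 0, depending only on γ, β, p, such that for all A ∈ (0,1), all r > 0, all u* ∈ ℝ^p, all integers n ≥ 1, and all distinct points u₁,…,uₙ in the Euclidean ball B(u*, r) ⊂ ℝ^p, one has ∫_{B(u*,r)} du / [A + min_{1≤j≤n} |u - uⱼ|^γ]^β ≤ c · n · A^{p/γ - β}. -/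
open MeasureTheory Set

private lemma aux_cont (β γ : ℝ) (hγ : 0 < γ) (p : ℕ) :
    Continuous fun y : EuclideanSpace ℝ (Fin p) => 1 / (1 + ‖y‖ ^ γ) ^ β := by
  have h1 : Continuous fun t : ℝ => t ^ γ :=
    continuous_iff_continuousAt.2 fun x => Real.continuousAt_rpow_const x γ (Or.inr hγ.le)
  have h2 : Continuous fun y : EuclideanSpace ℝ (Fin p) => 1 + ‖y‖ ^ γ :=
    continuous_const.add (h1.comp continuous_norm)
  have h3 : ∀ y : EuclideanSpace ℝ (Fin p), (0:ℝ) < 1 + ‖y‖ ^ γ := fun y => by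
    have := Real.rpow_nonneg (norm_nonneg y) γ; linarith
  have h4 : Continuous fun y : EuclideanSpace ℝ (Fin p) => (1 + ‖y‖ ^ γ) ^ β :=
    continuous_iff_continuousAt.2 fun x =>
      h2.continuousAt.rpow_const (Or.inl (ne_of_gt (h3 x)))
  exact continuous_const.div h4 fun y => ne_of_gt (Real.rpow_pos_of_pos (h3 y) β)

private lemma aux_bound (β γ : ℝ) (hβ : 0 < β) (hγ : 0 < γ) {t : ℝ} (ht : 0 ≤ t) :
    1 / (1 + t ^ γ) ^ β ≤ (2:ℝ) ^ (γ * β) * (1 + t) ^ (-(γ * β)) := by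
  have htγ : (0:ℝ) ≤ t ^ γ := Real.rpow_nonneg ht γ
  have hb1 : (0:ℝ) < 1 + t ^ γ := by linarith
  have hb2 : (0:ℝ) < 1 + t := by linarith
  have key : (1 + t) ^ γ ≤ 2 ^ γ * (1 + t ^ γ) := by
    rcases le_total t 1 with hle | hle
    · have h1 : (1 + t) ^ γ ≤ (2:ℝ) ^ γ :=
        Real.rpow_le_rpow (by linarith) (by linarith) hγ.le
      have h2 : (2:ℝ) ^ γ ≤ 2 ^ γ * (1 + t ^ γ) :=
        le_mul_of_one_le_right (Real.rpow_nonneg (by norm_num) γ) (by linarith)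
      linarith
    · have h1 : (1 + t) ^ γ ≤ (2 * t) ^ γ :=
        Real.rpow_le_rpow (by linarith) (by linarith) hγ.le
      have h2 : (2 * t) ^ γ = 2 ^ γ * t ^ γ :=
        Real.mul_rpow (by norm_num) (by linarith)
      have h3 : (2:ℝ) ^ γ * t ^ γ ≤ 2 ^ γ * (1 + t ^ γ) := by
        have h4 : (0:ℝ) ≤ (2:ℝ) ^ γ := Real.rpow_nonneg (by norm_num) γ
        nlinarith
      linarith
  have key2 : (1 + t) ^ (γ * β) ≤ 2 ^ (γ * β) * (1 + t ^ γ) ^ β := by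
    have e1 : (1 + t) ^ (γ * β) = ((1 + t) ^ γ) ^ β := Real.rpow_mul hb2.le γ β
    have e2 : (2:ℝ) ^ (γ * β) * (1 + t ^ γ) ^ β = (2 ^ γ * (1 + t ^ γ)) ^ β := by
      rw [Real.mul_rpow (Real.rpow_nonneg (by norm_num) γ) hb1.le, ← Real.rpow_mul (by norm_num)]
    rw [e1, e2]
    exact Real.rpow_le_rpow (Real.rpow_nonneg hb2.le γ) key hβ.le
  have hpos1 : (0:ℝ) < (1 + t ^ γ) ^ β := Real.rpow_pos_of_pos hb1 β
  have hpos2 : (0:ℝ) < (1 + t) ^ (γ * β) := Real.rpow_pos_of_pos hb2 (γ * β)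
  rw [Real.rpow_neg hb2.le, ← one_div, div_le_iff₀ hpos1, mul_assoc, mul_comm (1 / _),
    ← mul_assoc]
  calc (1:ℝ) = (1 + t) ^ (γ * β) * (1 / (1 + t) ^ (γ * β)) := by field_simp
    _ ≤ 2 ^ (γ * β) * (1 + t ^ γ) ^ β * (1 / (1 + t) ^ (γ * β)) := by
        apply mul_le_mul_of_nonneg_right key2
        positivity

theorem stmt_3 (β γ : ℝ) (p : ℕ) (hβ : 0 < β) (hγ : 0 < γ) (hp : 1 ≤ p)
    (h : (p : ℝ) < γ * β) :
    ∃ c : ℝ, 0 < c ∧ ∀ A ∈ Ioo (0:ℝ) 1, ∀ r : ℝ, 0 < r →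
      ∀ u₀ : EuclideanSpace ℝ (Fin p), ∀ n : ℕ, 1 ≤ n →
      ∀ u : Fin n → EuclideanSpace ℝ (Fin p), Function.Injective u →
      (∀ j, u j ∈ Metric.ball u₀ r) →
      (∫ x in Metric.ball u₀ r, 1 / (A + ⨅ j, ‖x - u j‖ ^ γ) ^ β)
        ≤ c * n * A ^ ((p : ℝ) / γ - β) := by
  classical
  set hfun : EuclideanSpace ℝ (Fin p) → ℝ := fun y => 1 / (1 + ‖y‖ ^ γ) ^ β with hfun_def
  have hInt_h : Integrable hfun := by
    have hpr : (Module.finrank ℝ (EuclideanSpace ℝ (Fin p)) : ℝ) < γ * β := by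
      simpa [finrank_euclideanSpace_fin] using h
    have hmaj : Integrable fun y : EuclideanSpace ℝ (Fin p) =>
        (2:ℝ) ^ (γ * β) * (1 + ‖y‖) ^ (-(γ * β)) :=
      (integrable_one_add_norm hpr).const_mul _
    refine hmaj.mono (aux_cont β γ hγ p).aestronglyMeasurable
      (Filter.Eventually.of_forall fun y => ?_)
    have hb : 1 / (1 + ‖y‖ ^ γ) ^ β ≤ (2:ℝ) ^ (γ * β) * (1 + ‖y‖) ^ (-(γ * β)) :=
      aux_bound β γ hβ hγ (norm_nonneg y)
    have h0 : (0:ℝ) ≤ 1 / (1 + ‖y‖ ^ γ) ^ β := by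
      have h3 : (0:ℝ) < 1 + ‖y‖ ^ γ := by
        have := Real.rpow_nonneg (norm_nonneg y) γ; linarith
      positivity
    rw [Real.norm_eq_abs, Real.norm_eq_abs, abs_of_nonneg h0]
    exact hb.trans (le_abs_self _)
  set I₁ : ℝ := ∫ y, hfun y with hI₁_def
  have hI₁_nonneg : 0 ≤ I₁ := by
    apply integral_nonneg
    intro y
    have h3 : (0:ℝ) < 1 + ‖y‖ ^ γ := by
      have := Real.rpow_nonneg (norm_nonneg y) γ; linarith
    simp only [hfun_def]
    positivity
  refine ⟨I₁ + 1, by linarith, ?_⟩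
  rintro A ⟨hA0, hA1⟩ r hr u₀ n hn u hu hmem
  haveI : Nonempty (Fin n) := ⟨⟨0, by omega⟩⟩
  set R : ℝ := A ^ (-(1/γ)) with hR_def
  have hRpos : 0 < R := Real.rpow_pos_of_pos hA0 _
  have hRγ : R ^ γ = A⁻¹ := by
    rw [hR_def, ← Real.rpow_mul hA0.le]
    rw [show -(1/γ) * γ = -1 by field_simp]
    exact Real.rpow_neg_one A
  set g : Fin n → EuclideanSpace ℝ (Fin p) → ℝ :=
    fun j x => 1 / (A + ‖x - u j‖ ^ γ) ^ β with hg_def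
  have hgnn : ∀ j x, 0 ≤ g j x := by
    intro j x
    have h1 : (0:ℝ) < A + ‖x - u j‖ ^ γ := by
      have := Real.rpow_nonneg (norm_nonneg (x - u j)) γ; linarith
    simp only [hg_def]
    positivity
  have hiden : ∀ (v : EuclideanSpace ℝ (Fin p)),
      1 / (A + ‖v‖ ^ γ) ^ β = A ^ (-β) * hfun (R • v) := by
    intro v
    have hs : (0:ℝ) ≤ ‖v‖ ^ γ := Real.rpow_nonneg (norm_nonneg v) γ
    have hnorm : ‖R • v‖ = R * ‖v‖ := by
      rw [norm_smul, Real.norm_eq_abs, abs_of_pos hRpos]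
    have hsm : ‖R • v‖ ^ γ = A⁻¹ * ‖v‖ ^ γ := by
      rw [hnorm, Real.mul_rpow hRpos.le (norm_nonneg v), hRγ]
    have e0 : A + ‖v‖ ^ γ = A * (1 + A⁻¹ * ‖v‖ ^ γ) := by field_simp
    have hinner : (0:ℝ) ≤ 1 + A⁻¹ * ‖v‖ ^ γ := by positivity
    simp only [hfun_def, hsm, e0, Real.mul_rpow hA0.le hinner]
    rw [Real.rpow_neg hA0.le]
    field_simp
  have hIj : ∀ j, Integrable (g j) := by
    intro j
    have h1 : Integrable fun x => hfun (R • x) :=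
      (integrable_comp_smul_iff volume hfun hRpos.ne').2 hInt_h
    have h2 : Integrable fun x => hfun (R • (x - u j)) := h1.comp_sub_right (u j)
    have h3 := h2.const_mul (A ^ (-β))
    have he : g j = fun x => A ^ (-β) * hfun (R • (x - u j)) :=
      funext fun x => hiden (x - u j)
    rw [he]; exact h3
  have hIval : ∀ j, ∫ x, g j x = A ^ ((p:ℝ)/γ - β) * I₁ := by
    intro j
    have he : g j = fun x => A ^ (-β) * hfun (R • (x - u j)) :=
      funext fun x => hiden (x - u j)
    rw [he, integral_const_mul,
      integral_sub_right_eq_self (fun x => hfun (R • x)) (u j),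
      Measure.integral_comp_smul_of_nonneg volume hfun R (hR := hRpos.le)]
    have hfr : Module.finrank ℝ (EuclideanSpace ℝ (Fin p)) = p := finrank_euclideanSpace_fin
    rw [hfr]
    have hRp : ((R ^ p)⁻¹ : ℝ) = A ^ ((p:ℝ)/γ) := by
      rw [hR_def, ← Real.rpow_natCast (A ^ (-(1/γ))) p, ← Real.rpow_mul hA0.le,
        ← Real.rpow_neg hA0.le]
      congr 1
      field_simp
    rw [hRp, smul_eq_mul, ← mul_assoc, ← Real.rpow_add hA0]
    rw [show -β + (p:ℝ)/γ = (p:ℝ)/γ - β by ring]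
  have hf_nonneg : ∀ x : EuclideanSpace ℝ (Fin p),
      (0:ℝ) ≤ 1 / (A + ⨅ j, ‖x - u j‖ ^ γ) ^ β := by
    intro x
    have h0 : 0 ≤ ⨅ j, ‖x - u j‖ ^ γ :=
      Real.iInf_nonneg fun j => Real.rpow_nonneg (norm_nonneg _) γ
    have h1 : (0:ℝ) < A + ⨅ j, ‖x - u j‖ ^ γ := by linarith
    positivity
  have hpt : ∀ x : EuclideanSpace ℝ (Fin p),
      1 / (A + ⨅ j, ‖x - u j‖ ^ γ) ^ β ≤ ∑ j, g j x := by
    intro x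
    obtain ⟨j0, hj0⟩ := exists_eq_ciInf_of_finite (f := fun j : Fin n => ‖x - u j‖ ^ γ)
    rw [← hj0]
    exact Finset.single_le_sum (f := fun j => g j x) (fun j _ => hgnn j x) (Finset.mem_univ j0)
  have hsum_int : Integrable (fun x => ∑ j, g j x) :=
    integrable_finset_sum _ fun j _ => hIj j
  have hXnn : (0:ℝ) ≤ A ^ ((p:ℝ)/γ - β) := (Real.rpow_pos_of_pos hA0 _).le
  calc (∫ x in Metric.ball u₀ r, 1 / (A + ⨅ j, ‖x - u j‖ ^ γ) ^ β)
      ≤ ∫ x in Metric.ball u₀ r, ∑ j, g j x :=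
        integral_mono_of_nonneg (Filter.Eventually.of_forall fun x => hf_nonneg x)
          hsum_int.integrableOn (Filter.Eventually.of_forall fun x => hpt x)
    _ = ∑ j, ∫ x in Metric.ball u₀ r, g j x :=
        integral_finset_sum _ fun j _ => (hIj j).integrableOn
    _ ≤ ∑ j : Fin n, ∫ x, g j x :=
        Finset.sum_le_sum fun j _ =>
          setIntegral_le_integral (hIj j) (Filter.Eventually.of_forall fun x => hgnn j x)
    _ = n * (A ^ ((p:ℝ)/γ - β) * I₁) := by
        simp [hIval, Finset.sum_const, Finset.card_univ, nsmul_eq_mul]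
    _ ≤ (I₁ + 1) * (n : ℝ) * A ^ ((p:ℝ)/γ - β) := by
        have hn0 : (0:ℝ) ≤ (n:ℝ) := Nat.cast_nonneg n
        nlinarith [mul_nonneg hn0 hXnn]
end

section
/- Let β > 0 be a constant and let p ≥ 1 be an integer such that β < p. Then there exists a constant c > 0, depending only on β and p, such that for all r > 0, all u* ∈ ℝ^p, all integers n ≥ 1, and all distinct u₁,…,uₙ in the Euclidean ball B(u*, r) ⊂ ℝ^p, one has ∫_{B(u*,r)} du / min_{1≤j≤n} |u - uⱼ|^β ≤ c · n^{β/p} · r^{p - β}. -/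
/-!
Put `ρ = r n^(-1/p)`. At every `x`, either the nearest `u_j` is at distance at least `ρ`, or `x`
lies in the `ρ`-ball around it, so
`1 / min_j |x - u_j|^β ≤ ρ^(-β) + ∑_j 1_{B(u_j, ρ)}(x) |x - u_j|^(-β)`.
Integrating over `B(u*, r)`, the constant term gives `ρ^(-β) |B(u*, r)|`, and each of the `n`
singular terms at most `∫_{B(0, ρ)} |y|^(-β) dy = ρ^(p-β) ∫_{B(0, 1)} |y|^(-β) dy`, which is
finite because `β < p`. With this choice of `ρ` both contributions are `n^(β/p) r^(p-β)` times
a constant.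
-/

open MeasureTheory Metric Set Module

lemma one_div_iInf_norm_sub_rpow_le {F ι : Type*} [SeminormedAddCommGroup F] [Fintype ι]
    [Nonempty ι] (u : ι → F) {β ρ : ℝ} (hβ : 0 ≤ β) (hρ : 0 < ρ) (x : F) :
    1 / (⨅ j, ‖x - u j‖ ^ β) ≤
      ρ ^ (-β) + ∑ j, (ball 0 ρ).indicator (fun y => ‖y‖ ^ (-β)) (x - u j) := by
  obtain ⟨j₀, hj₀⟩ := Finite.exists_min fun j => ‖x - u j‖ ^ β
  have hinf : ⨅ j, ‖x - u j‖ ^ β = ‖x - u j₀‖ ^ β :=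
    le_antisymm (ciInf_le (Finite.bddBelow_range _) j₀) (le_ciInf hj₀)
  have hnonneg : ∀ j, 0 ≤ (ball 0 ρ).indicator (fun y : F => ‖y‖ ^ (-β)) (x - u j) :=
    fun j => indicator_nonneg (fun y _ => Real.rpow_nonneg (norm_nonneg y) _) _
  rw [hinf, one_div, ← Real.rpow_neg (norm_nonneg _)]
  by_cases hx : x - u j₀ ∈ ball 0 ρ
  · calc ‖x - u j₀‖ ^ (-β) = (ball 0 ρ).indicator (fun y => ‖y‖ ^ (-β)) (x - u j₀) :=
          (indicator_of_mem hx (fun y : F => ‖y‖ ^ (-β))).symm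
      _ ≤ ∑ j, (ball 0 ρ).indicator (fun y => ‖y‖ ^ (-β)) (x - u j) :=
          Finset.single_le_sum (fun j _ => hnonneg j) (Finset.mem_univ j₀)
      _ ≤ _ := le_add_of_nonneg_left (Real.rpow_nonneg hρ.le _)
  · have hρx : ρ ≤ ‖x - u j₀‖ := by simpa using hx
    calc ‖x - u j₀‖ ^ (-β) ≤ ρ ^ (-β) := Real.rpow_le_rpow_of_nonpos hρ hρx (neg_nonpos.2 hβ)
      _ ≤ _ := le_add_of_nonneg_right (Finset.sum_nonneg fun j _ => hnonneg j)

section HaarMeasure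

variable {E : Type*} [NormedAddCommGroup E] [NormedSpace ℝ E] [FiniteDimensional ℝ E]
  [MeasurableSpace E] [BorelSpace E] (μ : Measure E) [μ.IsAddHaarMeasure]

lemma integrable_indicator_ball_norm_rpow_neg {β : ℝ} (hβ : 0 ≤ β) (hβd : β < finrank ℝ E)
    (ρ : ℝ) : Integrable ((ball (0 : E) ρ).indicator fun y => ‖y‖ ^ (-β)) μ := by
  have hd : 1 ≤ finrank ℝ E := by exact_mod_cast hβ.trans_lt hβd
  refine (integrable_indicator_iff measurableSet_ball).2
    (integrableOn_ball_of_norm_le_rpow hd hβd (C := 1) (ae_of_all _ fun y => ?_)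
      (continuous_norm.measurable.pow_const _).aestronglyMeasurable)
  rw [one_mul, Real.norm_of_nonneg (Real.rpow_nonneg (norm_nonneg y) _)]

lemma setIntegral_ball_norm_rpow_neg {ρ : ℝ} (hρ : 0 < ρ) (β : ℝ) :
    ∫ x in ball (0 : E) ρ, ‖x‖ ^ (-β) ∂μ =
      ρ ^ ((finrank ℝ E : ℝ) - β) * ∫ x in ball (0 : E) 1, ‖x‖ ^ (-β) ∂μ := by
  have hscale := Measure.setIntegral_comp_smul_of_pos μ (fun x : E => ‖x‖ ^ (-β)) (ball 0 1) hρ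
  simp only [norm_smul, Real.norm_of_nonneg hρ.le, smul_unitBall_of_pos hρ, smul_eq_mul] at hscale
  simp_rw [Real.mul_rpow hρ.le (norm_nonneg _), Real.rpow_neg hρ.le] at hscale
  rw [integral_const_mul] at hscale
  rw [Real.rpow_sub hρ, Real.rpow_natCast]
  have : ρ ^ finrank ℝ E ≠ 0 := by positivity
  have : ρ ^ β ≠ 0 := by positivity
  field_simp at hscale ⊢
  linear_combination -hscale

lemma setIntegral_one_div_iInf_norm_sub_rpow_le {ι : Type*} [Fintype ι] [Nonempty ι]
    (u : ι → E) {β ρ : ℝ} (hβ : 0 ≤ β) (hβd : β < finrank ℝ E) (hρ : 0 < ρ) {s : Set E}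
    (hs : μ s ≠ ⊤) :
    ∫ x in s, 1 / (⨅ j, ‖x - u j‖ ^ β) ∂μ ≤
      ρ ^ (-β) * μ.real s + Fintype.card ι * ∫ x in ball (0 : E) ρ, ‖x‖ ^ (-β) ∂μ := by
  set h := (ball (0 : E) ρ).indicator fun y => ‖y‖ ^ (-β)
  have h_int : Integrable h μ := integrable_indicator_ball_norm_rpow_neg μ hβ hβd ρ
  have h_nonneg : ∀ y, 0 ≤ h y :=
    fun y => indicator_nonneg (fun y _ => Real.rpow_nonneg (norm_nonneg y) _) y
  have hshift_int : ∀ j, Integrable (fun x => h (x - u j)) μ := fun j => h_int.comp_sub_right _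
  have hconst_int : IntegrableOn (fun _ => ρ ^ (-β)) s μ := integrableOn_const hs
  have hsum_int : IntegrableOn (fun x => ∑ j, h (x - u j)) s μ :=
    integrable_finsetSum _ fun j _ => (hshift_int j).integrableOn
  calc ∫ x in s, 1 / (⨅ j, ‖x - u j‖ ^ β) ∂μ
      ≤ ∫ x in s, (ρ ^ (-β) + ∑ j, h (x - u j)) ∂μ :=
        integral_mono_of_nonneg
          (ae_of_all _ fun x => one_div_nonneg.2 <|
            Real.iInf_nonneg fun j => Real.rpow_nonneg (norm_nonneg _) _)
          (hconst_int.add hsum_int)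
          (ae_of_all _ (one_div_iInf_norm_sub_rpow_le u hβ hρ))
    _ = ρ ^ (-β) * μ.real s + ∑ j, ∫ x in s, h (x - u j) ∂μ := by
        rw [integral_add hconst_int hsum_int, setIntegral_const, smul_eq_mul,
          mul_comm, integral_finsetSum _ fun j _ => (hshift_int j).integrableOn]
    _ ≤ ρ ^ (-β) * μ.real s + ∑ j, ∫ x, h (x - u j) ∂μ :=
        add_le_add_right (Finset.sum_le_sum fun j _ =>
          setIntegral_le_integral (hshift_int j) (ae_of_all _ fun x => h_nonneg _)) _
    _ = ρ ^ (-β) * μ.real s + Fintype.card ι * ∫ x in ball (0 : E) ρ, ‖x‖ ^ (-β) ∂μ := by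
        simp only [integral_sub_right_eq_self, Finset.sum_const, Finset.card_univ, nsmul_eq_mul, h,
          integral_indicator measurableSet_ball]

theorem setIntegral_ball_one_div_iInf_norm_sub_rpow_le {ι : Type*} [Fintype ι] [Nonempty ι]
    (u : ι → E) {β r : ℝ} (hβ : 0 ≤ β) (hβd : β < finrank ℝ E) (hr : 0 < r) (u₀ : E) :
    ∫ x in ball u₀ r, 1 / (⨅ j, ‖x - u j‖ ^ β) ∂μ ≤
      (μ.real (ball (0 : E) 1) + ∫ x in ball (0 : E) 1, ‖x‖ ^ (-β) ∂μ) *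
        (Fintype.card ι : ℝ) ^ (β / finrank ℝ E) * r ^ ((finrank ℝ E : ℝ) - β) := by
  set d : ℝ := (finrank ℝ E : ℝ)
  set N : ℝ := (Fintype.card ι : ℝ)
  have hd : 0 < d := hβ.trans_lt hβd
  set a := N ^ (1 / d)
  have ha : 0 < a := Real.rpow_pos_of_pos (by simp [N, Fintype.card_pos]) _
  have hN : N = a ^ d := by
    rw [← Real.rpow_mul (Nat.cast_nonneg _), one_div_mul_cancel hd.ne', Real.rpow_one]
  have hNβ : N ^ (β / d) = a ^ β := by
    rw [← Real.rpow_mul (Nat.cast_nonneg _), one_div_mul_eq_div]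
  have hvol : μ.real (ball u₀ r) = r ^ d * μ.real (ball 0 1) := by
    rw [measureReal_def, Measure.addHaar_ball_of_pos μ u₀ hr, ENNReal.toReal_mul,
      ENNReal.toReal_ofReal (by positivity), Real.rpow_natCast, measureReal_def]
  calc ∫ x in ball u₀ r, 1 / (⨅ j, ‖x - u j‖ ^ β) ∂μ
      ≤ (r / a) ^ (-β) * μ.real (ball u₀ r) + N * ∫ x in ball (0 : E) (r / a), ‖x‖ ^ (-β) ∂μ :=
        setIntegral_one_div_iInf_norm_sub_rpow_le μ u hβ hβd (by positivity)
          measure_ball_lt_top.ne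
    _ = _ := by
        rw [setIntegral_ball_norm_rpow_neg μ (by positivity), hvol, hNβ, hN]
        change (r / a) ^ (-β) * _ + a ^ d * ((r / a) ^ (d - β) * _) = _
        rw [Real.div_rpow hr.le ha.le, Real.div_rpow hr.le ha.le, Real.rpow_neg hr.le,
          Real.rpow_neg ha.le, Real.rpow_sub hr, Real.rpow_sub ha]
        field_simp

end HaarMeasure

theorem stmt_4_general (β : ℝ) (p : ℕ) (hβ : 0 < β) (h : β < (p : ℝ)) :
    ∃ c : ℝ, 0 < c ∧ ∀ r : ℝ, 0 < r →
      ∀ u₀ : EuclideanSpace ℝ (Fin p), ∀ n : ℕ, 1 ≤ n →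
      ∀ u : Fin n → EuclideanSpace ℝ (Fin p), Function.Injective u →
      (∀ j, u j ∈ Metric.ball u₀ r) →
      (∫ x in Metric.ball u₀ r, 1 / (⨅ j, ‖x - u j‖ ^ β))
        ≤ c * (n : ℝ) ^ (β / (p : ℝ)) * r ^ ((p : ℝ) - β) := by
  have hβp : β < finrank ℝ (EuclideanSpace ℝ (Fin p)) := by rwa [finrank_euclideanSpace_fin]
  refine ⟨volume.real (ball (0 : EuclideanSpace ℝ (Fin p)) 1) +
      ∫ x in ball (0 : EuclideanSpace ℝ (Fin p)) 1, ‖x‖ ^ (-β), ?_, ?_⟩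
  · exact add_pos_of_pos_of_nonneg
      (ENNReal.toReal_pos (measure_ball_pos _ _ one_pos).ne' measure_ball_lt_top.ne)
      (setIntegral_nonneg measurableSet_ball fun x _ => Real.rpow_nonneg (norm_nonneg x) _)
  · intro r hr u₀ n hn u _ _
    have : Nonempty (Fin n) := ⟨⟨0, hn⟩⟩
    simpa [finrank_euclideanSpace_fin] using
      setIntegral_ball_one_div_iInf_norm_sub_rpow_le volume u hβ.le hβp hr u₀

theorem stmt_4 (β : ℝ) (p : ℕ) (hβ : 0 < β) (hp : 1 ≤ p) (h : β < (p : ℝ)) :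
    ∃ c : ℝ, 0 < c ∧ ∀ r : ℝ, 0 < r →
      ∀ u₀ : EuclideanSpace ℝ (Fin p), ∀ n : ℕ, 1 ≤ n →
      ∀ u : Fin n → EuclideanSpace ℝ (Fin p), Function.Injective u →
      (∀ j, u j ∈ Metric.ball u₀ r) →
      (∫ x in Metric.ball u₀ r, 1 / (⨅ j, ‖x - u j‖ ^ β))
        ≤ c * (n : ℝ) ^ (β / (p : ℝ)) * r ^ ((p : ℝ) - β) :=
  stmt_4_general β p hβ h
end

section
/- Let β > 0 be a constant and let p ≥ 1 be an integer with β < p. Then there exists a constant c > 0, depending only on β and p, such that for all constants r > 0 and K > 0, all u* ∈ ℝ^p, all integers n ≥ 1, and all distinct u₁,…,uₙ in the Euclidean ball B(u*, r), one has ∫_{B(u*,r)} log[e + K · (min_{1≤j≤n} |u - uⱼ|)^{-β}] du ≤ c · r^p · log[e + K · (r / n^{1/p})^{-β}]. -/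
open MeasureTheory Set

private lemma log_add_le' (b : ℝ) (hb : 0 ≤ b) :
    Real.log (Real.exp 1 + b) ≤ 1 + b := by
  have h1 : Real.exp 1 + b ≤ Real.exp 1 * Real.exp b := by
    nlinarith [Real.add_one_le_exp b, Real.add_one_le_exp (1:ℝ)]
  calc Real.log (Real.exp 1 + b) ≤ Real.log (Real.exp 1 * Real.exp b) :=
        Real.log_le_log (by positivity) h1
    _ = 1 + b := by rw [← Real.exp_add, Real.log_exp]

private lemma log_mul_split' (a b : ℝ) (ha : 0 < a) (hb : 0 < b) :
    Real.log (Real.exp 1 + a * b) ≤ Real.log (Real.exp 1 + a) + (1 + b) := by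
  have key : Real.exp 1 + a * b ≤ (Real.exp 1 + a) * (Real.exp 1 + b) := by
    nlinarith [Real.add_one_le_exp (1:ℝ)]
  calc Real.log (Real.exp 1 + a * b)
      ≤ Real.log ((Real.exp 1 + a) * (Real.exp 1 + b)) := Real.log_le_log (by positivity) key
    _ = Real.log (Real.exp 1 + a) + Real.log (Real.exp 1 + b) := by
        rw [Real.log_mul (by positivity) (by positivity)]
    _ ≤ Real.log (Real.exp 1 + a) + (1 + b) := by
        have := log_add_le' b hb.le
        linarith

theorem stmt_5 (β : ℝ) (p : ℕ) (hβ : 0 < β) (hp : 1 ≤ p) (h : β < (p : ℝ)) :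
    ∃ c : ℝ, 0 < c ∧ ∀ r : ℝ, 0 < r → ∀ K : ℝ, 0 < K →
      ∀ u₀ : EuclideanSpace ℝ (Fin p), ∀ n : ℕ, 1 ≤ n →
      ∀ u : Fin n → EuclideanSpace ℝ (Fin p), Function.Injective u →
      (∀ j, u j ∈ Metric.ball u₀ r) →
      (∫ x in Metric.ball u₀ r,
          Real.log (Real.exp 1 + K * (⨅ j, ‖x - u j‖) ^ (-β)))
        ≤ c * r ^ (p : ℝ) *
            Real.log (Real.exp 1 + K * (r / (n : ℝ) ^ (1 / (p : ℝ))) ^ (-β)) := by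
  haveI : Nonempty (Fin p) := Fin.pos_iff_nonempty.mp hp
  have hp0 : (0:ℝ) < p := by exact_mod_cast hp
  have hpβ : (0:ℝ) < (p:ℝ) - β := by linarith
  set κ : ℝ := Real.sqrt Real.pi ^ p / Real.Gamma ((p:ℝ) / 2 + 1) with hκdef
  have hκ0 : 0 < κ := div_pos (pow_pos (Real.sqrt_pos.mpr Real.pi_pos) p)
    (Real.Gamma_pos_of_pos (by positivity))
  have hvol : ∀ (x : EuclideanSpace ℝ (Fin p)) (s : ℝ), 0 ≤ s →
      volume (Metric.ball x s) = ENNReal.ofReal (s ^ p * κ) := by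
    intro x s hs
    rw [EuclideanSpace.volume_ball, Fintype.card_fin, ← ENNReal.ofReal_pow hs,
      ← ENNReal.ofReal_mul (by positivity)]
  refine ⟨κ * (3 + β / ((p:ℝ) - β)), by positivity, ?_⟩
  intro r hr K hK u₀ n hn u _ _
  haveI : Nonempty (Fin n) := Fin.pos_iff_nonempty.mp hn
  have hn0 : (0:ℝ) < n := by exact_mod_cast hn
  set ρ : ℝ := r / (n:ℝ) ^ (1/(p:ℝ)) with hρdef
  have hρ : 0 < ρ := div_pos hr (Real.rpow_pos_of_pos hn0 _)
  set L : ℝ := Real.log (Real.exp 1 + K * ρ ^ (-β)) with hLdef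
  have hL1 : 1 ≤ L := by
    have h1 : Real.exp 1 ≤ Real.exp 1 + K * ρ ^ (-β) :=
      le_add_of_nonneg_right (by positivity)
    calc (1:ℝ) = Real.log (Real.exp 1) := (Real.log_exp 1).symm
      _ ≤ L := Real.log_le_log (Real.exp_pos 1) h1
  set m : EuclideanSpace ℝ (Fin p) → ℝ := fun x => ⨅ j, ‖x - u j‖ with hmdef
  have hbdd : ∀ x : EuclideanSpace ℝ (Fin p), BddBelow (Set.range fun j => ‖x - u j‖) :=
    fun x => ⟨0, by rintro b ⟨j, rfl⟩; exact norm_nonneg _⟩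
  have hmeq : ∀ x, m x = Metric.infDist x (Set.range u) := by
    intro x
    apply le_antisymm
    · by_contra h'
      push_neg at h'
      obtain ⟨y, hy, hxy⟩ := (Metric.infDist_lt_iff (Set.range_nonempty u)).mp h'
      obtain ⟨j, rfl⟩ := hy
      have hle := ciInf_le (hbdd x) j
      rw [dist_eq_norm] at hxy
      exact absurd (lt_of_le_of_lt hle hxy) (lt_irrefl _)
    · refine le_ciInf fun j => ?_
      rw [← dist_eq_norm]
      exact Metric.infDist_le_dist_of_mem (Set.mem_range_self j)
  have hmcont : Continuous m := by
    have : m = fun x => Metric.infDist x (Set.range u) := funext hmeq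
    rw [this]
    exact Metric.continuous_infDist_pt _
  have hm0 : ∀ x, 0 ≤ m x := fun x => Real.iInf_nonneg (fun j => norm_nonneg _)
  have hβne : -β ≠ 0 := by simp [ne_of_gt hβ]
  -- pointwise bound
  have hpt : ∀ x, Real.log (Real.exp 1 + K * (m x) ^ (-β)) ≤ (L + 1) + (m x / ρ) ^ (-β) := by
    intro x
    rcases (hm0 x).lt_or_eq with h0 | h0
    · have hs : 0 < m x / ρ := div_pos h0 hρ
      have hfac : K * (m x) ^ (-β) = (K * ρ ^ (-β)) * ((m x / ρ)) ^ (-β) := by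
        rw [Real.div_rpow (hm0 x) hρ.le, mul_assoc, mul_div_assoc']
        rw [mul_comm (ρ ^ (-β)) ((m x) ^ (-β)), mul_div_assoc,
          div_self (ne_of_gt (Real.rpow_pos_of_pos hρ _)), mul_one]
      rw [hfac]
      have := log_mul_split' (K * ρ ^ (-β)) ((m x / ρ) ^ (-β)) (by positivity)
        (Real.rpow_pos_of_pos hs _)
      rw [← hLdef] at this
      linarith
    · rw [← h0, Real.zero_rpow hβne, zero_div, Real.zero_rpow hβne]
      simp only [mul_zero, add_zero, Real.log_exp]
      linarith
  -- algebraic facts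
  have hnp : ((n:ℝ) ^ (1/(p:ℝ))) ^ p = n := by
    rw [← Real.rpow_natCast ((n:ℝ) ^ (1/(p:ℝ))) p, ← Real.rpow_mul hn0.le, one_div,
      inv_mul_cancel₀ (ne_of_gt hp0), Real.rpow_one]
  have hρp : (n:ℝ) * ρ ^ p = r ^ p := by
    rw [hρdef, div_pow, hnp]
    field_simp
  have htp : ∀ t : ℝ, 0 < t → (t ^ (-(1/β))) ^ p = t ^ (-((p:ℝ)/β)) := by
    intro t ht
    rw [← Real.rpow_natCast (t ^ (-(1/β))) p, ← Real.rpow_mul ht.le]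
    congr 1
    field_simp
  -- measurability of the dominating function
  have hgmeas : Measurable fun x => (m x / ρ) ^ (-β) := by
    have heq : (fun x => (m x / ρ) ^ (-β)) = fun x => ((m x / ρ) ^ β)⁻¹ := by
      funext x; exact Real.rpow_neg (div_nonneg (hm0 x) hρ.le) β
    rw [heq]
    exact (((Real.continuous_rpow_const hβ.le).comp (hmcont.div_const ρ)).measurable).inv
  -- the key layer-cake estimate
  have HH : ∫⁻ x in Metric.ball u₀ r, ENNReal.ofReal ((m x / ρ) ^ (-β))
      ≤ ENNReal.ofReal (r ^ p * κ) * ENNReal.ofReal (1 + β / ((p:ℝ) - β)) := by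
    have hsub : ∀ t : ℝ, 0 < t →
        {x | t < (m x / ρ) ^ (-β)} ⊆ ⋃ j, Metric.ball (u j) (ρ * t ^ (-(1/β))) := by
      intro t ht x hx
      simp only [Set.mem_setOf_eq] at hx
      have hmx : 0 < m x := by
        rcases (hm0 x).lt_or_eq with h' | h'
        · exact h'
        · exfalso
          rw [← h', zero_div, Real.zero_rpow hβne] at hx
          linarith
      have hs : 0 < m x / ρ := div_pos hmx hρ
      have h2 : ((m x / ρ) ^ (-β)) ^ (-(1/β)) < t ^ (-(1/β)) :=
        Real.rpow_lt_rpow_of_neg ht hx (neg_lt_zero.mpr (by positivity))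
      have hmul : (-β) * (-(1/β)) = 1 := by field_simp
      rw [← Real.rpow_mul hs.le, hmul, Real.rpow_one] at h2
      have hlt : m x < ρ * t ^ (-(1/β)) := by
        rw [div_lt_iff₀ hρ] at h2
        linarith [mul_comm (t ^ (-(1/β))) ρ]
      rw [hmeq x] at hlt
      obtain ⟨y, hy, hxy⟩ := (Metric.infDist_lt_iff (Set.range_nonempty u)).mp hlt
      obtain ⟨j, rfl⟩ := hy
      exact Set.mem_iUnion.mpr ⟨j, Metric.mem_ball.mpr hxy⟩
    set V : ENNReal := ENNReal.ofReal (r ^ p * κ) with hV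
    have hb1 : ∀ t : ℝ, (volume.restrict (Metric.ball u₀ r)) {x | t < (m x / ρ) ^ (-β)} ≤ V := by
      intro t
      rw [Measure.restrict_apply' measurableSet_ball]
      calc volume ({x | t < (m x / ρ) ^ (-β)} ∩ Metric.ball u₀ r)
          ≤ volume (Metric.ball u₀ r) := measure_mono Set.inter_subset_right
        _ = V := hvol u₀ r hr.le
    have hb2 : ∀ t : ℝ, 0 < t →
        (volume.restrict (Metric.ball u₀ r)) {x | t < (m x / ρ) ^ (-β)}
          ≤ V * ENNReal.ofReal (t ^ (-((p:ℝ)/β))) := by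
      intro t ht
      have hδ : 0 ≤ ρ * t ^ (-(1/β)) := by positivity
      calc (volume.restrict (Metric.ball u₀ r)) {x | t < (m x / ρ) ^ (-β)}
          ≤ volume {x | t < (m x / ρ) ^ (-β)} := by
            rw [Measure.restrict_apply' measurableSet_ball]
            exact measure_mono Set.inter_subset_left
        _ ≤ volume (⋃ j, Metric.ball (u j) (ρ * t ^ (-(1/β)))) := measure_mono (hsub t ht)
        _ ≤ ∑' _ : Fin n, ENNReal.ofReal ((ρ * t ^ (-(1/β))) ^ p * κ) := by
            refine le_trans (measure_iUnion_le _) ?_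
            exact le_of_eq (tsum_congr fun j => hvol (u j) _ hδ)
        _ = V * ENNReal.ofReal (t ^ (-((p:ℝ)/β))) := by
            rw [tsum_fintype, Finset.sum_const, Finset.card_univ, Fintype.card_fin,
              nsmul_eq_mul, ← ENNReal.ofReal_natCast n,
              ← ENNReal.ofReal_mul (Nat.cast_nonneg n), hV,
              ← ENNReal.ofReal_mul (by positivity)]
            congr 1
            have hδp : (ρ * t ^ (-(1/β))) ^ p = ρ ^ p * t ^ (-((p:ℝ)/β)) := by
              rw [mul_pow, htp t ht]
            rw [hδp]
            linear_combination (t ^ (-((p:ℝ)/β)) * κ) * hρp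
    rw [lintegral_eq_lintegral_meas_lt _ (ae_of_all _ fun x =>
        Real.rpow_nonneg (div_nonneg (hm0 x) hρ.le) _) hgmeas.aemeasurable]
    have hsplit : (Ioi (0:ℝ)) = Ioc 0 1 ∪ Ioi 1 := (Set.Ioc_union_Ioi_eq_Ioi zero_le_one).symm
    rw [hsplit, lintegral_union measurableSet_Ioi (Set.Ioc_disjoint_Ioi le_rfl)]
    have e1 : ∫⁻ t in Ioc (0:ℝ) 1,
        (volume.restrict (Metric.ball u₀ r)) {x | t < (m x / ρ) ^ (-β)} ≤ V := by
      calc ∫⁻ t in Ioc (0:ℝ) 1, (volume.restrict (Metric.ball u₀ r)) {x | t < (m x / ρ) ^ (-β)}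
          ≤ ∫⁻ _ in Ioc (0:ℝ) 1, V := setLIntegral_mono' measurableSet_Ioc fun t _ => hb1 t
        _ = V * volume (Ioc (0:ℝ) 1) := setLIntegral_const _ _
        _ = V := by simp [Real.volume_Ioc]
    have hexp : -((p:ℝ)/β) < -1 := by
      rw [neg_lt_neg_iff]
      exact (one_lt_div hβ).mpr h
    have e2 : ∫⁻ t in Ioi (1:ℝ),
        (volume.restrict (Metric.ball u₀ r)) {x | t < (m x / ρ) ^ (-β)}
          ≤ V * ENNReal.ofReal (β / ((p:ℝ) - β)) := by
      calc ∫⁻ t in Ioi (1:ℝ), (volume.restrict (Metric.ball u₀ r)) {x | t < (m x / ρ) ^ (-β)}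
          ≤ ∫⁻ t in Ioi (1:ℝ), V * ENNReal.ofReal (t ^ (-((p:ℝ)/β))) :=
            setLIntegral_mono' measurableSet_Ioi fun t ht =>
              hb2 t (lt_trans one_pos ht)
        _ = V * ∫⁻ t in Ioi (1:ℝ), ENNReal.ofReal (t ^ (-((p:ℝ)/β))) :=
            lintegral_const_mul' _ _ ENNReal.ofReal_ne_top
        _ = V * ENNReal.ofReal (∫ t in Ioi (1:ℝ), t ^ (-((p:ℝ)/β))) := by
            rw [ofReal_integral_eq_lintegral_ofReal
              (integrableOn_Ioi_rpow_of_lt hexp one_pos)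
              (by
                filter_upwards [ae_restrict_mem measurableSet_Ioi] with t ht
                exact Real.rpow_nonneg (by linarith [Set.mem_Ioi.mp ht] : (0:ℝ) ≤ t) _)]
        _ = V * ENNReal.ofReal (β / ((p:ℝ) - β)) := by
            have h1 : -((p:ℝ)/β) + 1 ≠ 0 := by
              intro hc
              have : (p:ℝ)/β = 1 := by linarith
              rw [this] at hexp; linarith
            have harith : -(1:ℝ) ^ (-((p:ℝ)/β) + 1) / (-((p:ℝ)/β) + 1) = β / ((p:ℝ) - β) := by
              rw [Real.one_rpow]
              rw [div_eq_div_iff h1 (ne_of_gt hpβ)]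
              field_simp
              ring
            rw [integral_Ioi_rpow_of_lt hexp one_pos, harith]
    calc (∫⁻ t in Ioc (0:ℝ) 1, (volume.restrict (Metric.ball u₀ r)) {x | t < (m x / ρ) ^ (-β)})
          + ∫⁻ t in Ioi (1:ℝ), (volume.restrict (Metric.ball u₀ r)) {x | t < (m x / ρ) ^ (-β)}
        ≤ V + V * ENNReal.ofReal (β / ((p:ℝ) - β)) := add_le_add e1 e2
      _ = V * ENNReal.ofReal (1 + β / ((p:ℝ) - β)) := by
          rw [ENNReal.ofReal_add zero_le_one (by positivity), mul_add, ENNReal.ofReal_one, mul_one]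
  -- final assembly
  have hgoal : (∫ x in Metric.ball u₀ r,
      Real.log (Real.exp 1 + K * (⨅ j, ‖x - u j‖) ^ (-β)))
      = ∫ x in Metric.ball u₀ r, Real.log (Real.exp 1 + K * (m x) ^ (-β)) := rfl
  have hrp : r ^ ((p:ℕ):ℝ) = r ^ p := Real.rpow_natCast r p
  rw [hgoal, hrp]
  have hRHS0 : 0 ≤ κ * (3 + β / ((p:ℝ) - β)) * r ^ p * L := by
    have : (0:ℝ) ≤ L := by linarith
    positivity
  by_cases hint : Integrable (fun x => Real.log (Real.exp 1 + K * (m x) ^ (-β)))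
      (volume.restrict (Metric.ball u₀ r))
  · have hfnn : 0 ≤ᵐ[volume.restrict (Metric.ball u₀ r)]
        fun x => Real.log (Real.exp 1 + K * (m x) ^ (-β)) := by
      refine ae_of_all _ fun x => Real.log_nonneg ?_
      have h2 : (2:ℝ) ≤ Real.exp 1 := by nlinarith [Real.add_one_le_exp (1:ℝ)]
      have h3 : 0 ≤ K * (m x) ^ (-β) := mul_nonneg hK.le (Real.rpow_nonneg (hm0 x) _)
      linarith
    rw [integral_eq_lintegral_of_nonneg_ae hfnn hint.aestronglyMeasurable]
    apply ENNReal.toReal_le_of_le_ofReal hRHS0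
    calc ∫⁻ x in Metric.ball u₀ r, ENNReal.ofReal (Real.log (Real.exp 1 + K * (m x) ^ (-β)))
        ≤ ∫⁻ x in Metric.ball u₀ r,
            (ENNReal.ofReal (L + 1) + ENNReal.ofReal ((m x / ρ) ^ (-β))) := by
          apply lintegral_mono
          intro x
          exact le_trans (ENNReal.ofReal_le_ofReal (hpt x)) ENNReal.ofReal_add_le
      _ = ENNReal.ofReal (L + 1) * volume (Metric.ball u₀ r)
          + ∫⁻ x in Metric.ball u₀ r, ENNReal.ofReal ((m x / ρ) ^ (-β)) := by
          rw [lintegral_add_right _ hgmeas.ennreal_ofReal, setLIntegral_const]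
      _ ≤ ENNReal.ofReal (L + 1) * ENNReal.ofReal (r ^ p * κ)
          + ENNReal.ofReal (r ^ p * κ) * ENNReal.ofReal (1 + β / ((p:ℝ) - β)) := by
          rw [hvol u₀ r hr.le]
          exact add_le_add le_rfl HH
      _ = ENNReal.ofReal ((L + 1) * (r ^ p * κ) + (r ^ p * κ) * (1 + β / ((p:ℝ) - β))) := by
          have hLp : (0:ℝ) ≤ L + 1 := by linarith
          have hrk : (0:ℝ) ≤ r ^ p * κ := by positivity
          rw [ENNReal.ofReal_add (mul_nonneg hLp hrk) (by positivity),
            ENNReal.ofReal_mul hLp, ENNReal.ofReal_mul hrk]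
      _ ≤ ENNReal.ofReal (κ * (3 + β / ((p:ℝ) - β)) * r ^ p * L) := by
          apply ENNReal.ofReal_le_ofReal
          have hq : 0 ≤ β / ((p:ℝ) - β) := by positivity
          have hrpκ : 0 < r ^ p * κ := by positivity
          nlinarith [mul_nonneg (mul_nonneg hrpκ.le hq) (by linarith : (0:ℝ) ≤ L - 1),
            mul_nonneg hrpκ.le (by linarith : (0:ℝ) ≤ L - 1)]
  · rw [integral_undef hint]
    exact hRHS0
end

section
/- For every β > 0 and integer p ≥ 1 with β < p, the function ψ(x) = x · log(e + K·x^{-β/p}) is concave on (0, ∞) for every constant K > 0. -/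
/-!
Write `G x = c + K x^(-α)`. Then `ψ' = log G - α K x^(-α) / G`, and
`ψ'' = -α K x^(-α-1) ((1 - α) G + α K x^(-α)) / G²`, which is `≤ 0` as soon as `0 ≤ α ≤ 1`.
-/

open Set Real

section MulLogAddMulRpowNeg

variable {c K α x : ℝ}

lemma add_mul_rpow_neg_pos (hc : 0 ≤ c) (hK : 0 < K) (hx : 0 < x) : 0 < c + K * x ^ (-α) := by
  have := rpow_pos_of_pos hx (-α)
  positivity

lemma hasDerivAt_const_mul_rpow_neg (hx : 0 < x) :
    HasDerivAt (fun y => K * y ^ (-α)) (K * (-α * x ^ (-α - 1))) x :=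
  (hasDerivAt_rpow_const (Or.inl hx.ne')).const_mul K

lemma hasDerivAt_log_add_mul_rpow_neg (hc : 0 ≤ c) (hK : 0 < K) (hx : 0 < x) :
    HasDerivAt (fun y => log (c + K * y ^ (-α)))
      (K * (-α * x ^ (-α - 1)) / (c + K * x ^ (-α))) x :=
  (hasDerivAt_const_mul_rpow_neg hx).const_add c |>.log (add_mul_rpow_neg_pos hc hK hx).ne'

lemma hasDerivAt_mul_log_add_mul_rpow_neg (hc : 0 ≤ c) (hK : 0 < K) (hx : 0 < x) :
    HasDerivAt (fun y => y * log (c + K * y ^ (-α)))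
      (log (c + K * x ^ (-α)) - α * (K * x ^ (-α) / (c + K * x ^ (-α)))) x := by
  refine ((hasDerivAt_id' x).mul (hasDerivAt_log_add_mul_rpow_neg hc hK hx)).congr_deriv ?_
  have hxα : x * (K * (-α * x ^ (-α - 1))) = -(α * (K * x ^ (-α))) := by
    rw [rpow_sub_one hx.ne']
    field_simp
  rw [← mul_div_assoc, hxα]
  ring

lemma hasDerivAt_deriv_mul_log_add_mul_rpow_neg (hc : 0 ≤ c) (hK : 0 < K) (hx : 0 < x) :
    HasDerivAt (fun y => log (c + K * y ^ (-α)) - α * (K * y ^ (-α) / (c + K * y ^ (-α))))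
      (-(α * K * x ^ (-α - 1)) * ((1 - α) * (c + K * x ^ (-α)) + α * (K * x ^ (-α))) /
        (c + K * x ^ (-α)) ^ 2) x := by
  refine ((hasDerivAt_log_add_mul_rpow_neg hc hK hx).sub
    (((hasDerivAt_const_mul_rpow_neg hx).div ((hasDerivAt_const_mul_rpow_neg hx).const_add c)
      (add_mul_rpow_neg_pos hc hK hx).ne').const_mul α)).congr_deriv ?_
  have hG := (add_mul_rpow_neg_pos (α := α) hc hK hx).ne'
  field_simp
  ring

theorem concaveOn_mul_log_add_mul_rpow_neg (hc : 0 ≤ c) (hK : 0 < K) (hα0 : 0 ≤ α)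
    (hα1 : α ≤ 1) : ConcaveOn ℝ (Ioi 0) (fun x => x * log (c + K * x ^ (-α))) :=
  concaveOn_of_hasDerivWithinAt2_nonpos (convex_Ioi 0)
    (fun x hx => (hasDerivAt_mul_log_add_mul_rpow_neg hc hK hx).continuousAt.continuousWithinAt)
    (fun x hx => (hasDerivAt_mul_log_add_mul_rpow_neg hc hK (interior_subset hx)).hasDerivWithinAt)
    (fun x hx =>
      (hasDerivAt_deriv_mul_log_add_mul_rpow_neg hc hK (interior_subset hx)).hasDerivWithinAt)
    fun x hx => by
      have hx : 0 < x := interior_subset hx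
      have hU : 0 < K * x ^ (-α) := mul_pos hK (rpow_pos_of_pos hx _)
      have hG := add_mul_rpow_neg_pos (α := α) hc hK hx
      have := rpow_pos_of_pos hx (-α - 1)
      refine div_nonpos_of_nonpos_of_nonneg (mul_nonpos_of_nonpos_of_nonneg ?_ ?_) (by positivity)
      · exact neg_nonpos.2 (by positivity)
      · exact add_nonneg (mul_nonneg (sub_nonneg.2 hα1) hG.le) (mul_nonneg hα0 hU.le)

end MulLogAddMulRpowNeg

theorem stmt_6_general (β : ℝ) (p : ℕ) (hβ : 0 < β) (h : β < (p : ℝ))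
    (K : ℝ) (hK : 0 < K) :
    ConcaveOn ℝ (Ioi (0:ℝ))
      (fun x : ℝ => x * Real.log (Real.exp 1 + K * x ^ (-(β / (p : ℝ))))) :=
  concaveOn_mul_log_add_mul_rpow_neg (exp_pos 1).le hK
    (div_nonneg hβ.le p.cast_nonneg) (div_le_one_of_le₀ h.le p.cast_nonneg)

theorem stmt_6 (β : ℝ) (p : ℕ) (hβ : 0 < β) (hp : 1 ≤ p) (h : β < (p : ℝ))
    (K : ℝ) (hK : 0 < K) :
    ConcaveOn ℝ (Ioi (0:ℝ))
      (fun x : ℝ => x * Real.log (Real.exp 1 + K * x ^ (-(β / (p : ℝ))))) :=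
  stmt_6_general β p hβ h K hK
end

section
/- Let U and V be independent centered Gaussian random vectors, U = (U₀, U₁, …, Uₙ) and V = (V₀, V₁, …, Vₙ), and set Zⱼ = Uⱼ + Vⱼ (or more generally Zⱼ = Uⱼ - Vⱼ). Then the conditional variance satisfies Var(Z₀ | Z₁, …, Zₙ) ≥ Var(U₀ | U₁, …, Uₙ) + Var(V₀ | V₁, …, Vₙ), where conditional variance is interpreted as the infimum over linear predictors: Var(Z₀|Z₁,…,Zₙ) = inf_{a∈ℝⁿ} E[(Z₀ - Σⱼ aⱼZⱼ)²]. -/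
/-!
For fixed coefficients `a`, the prediction error of `Z` is the sum (or difference) of the
prediction errors of `U` and `V` with the same coefficients. These are centered and
independent, so their second moments add. Hence every value of the infimum defining
`Var(Z₀ | Z₁, …, Zₙ)` dominates the sum of one value of each of the other two infima.
-/

open MeasureTheory ProbabilityTheory

namespace ProbabilityTheory.IndepFun

variable {Ω : Type*} [MeasurableSpace Ω] {μ : Measure Ω} {X Y : Ω → ℝ}

theorem variance_sub (hX : MemLp X 2 μ) (hY : MemLp Y 2 μ) (h : IndepFun X Y μ) :
    Var[X - Y; μ] = Var[X; μ] + Var[Y; μ] := by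
  rw [sub_eq_add_neg, (h.comp measurable_id measurable_neg).variance_add hX hY.neg, variance_neg]

variable [IsFiniteMeasure μ]

theorem integral_add_sq (hX : MemLp X 2 μ) (hY : MemLp Y 2 μ) (h : IndepFun X Y μ)
    (hX0 : ∫ ω, X ω ∂μ = 0) (hY0 : ∫ ω, Y ω ∂μ = 0) :
    ∫ ω, (X + Y) ω ^ 2 ∂μ = ∫ ω, X ω ^ 2 ∂μ + ∫ ω, Y ω ^ 2 ∂μ := by
  have hXY0 : ∫ ω, (X + Y) ω ∂μ = 0 := by
    rw [integral_add' (hX.integrable one_le_two) (hY.integrable one_le_two), hX0, hY0, add_zero]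
  rw [← variance_of_integral_eq_zero (hX.add hY).aemeasurable hXY0,
    ← variance_of_integral_eq_zero hX.aemeasurable hX0,
    ← variance_of_integral_eq_zero hY.aemeasurable hY0, h.variance_add hX hY]

theorem integral_sub_sq (hX : MemLp X 2 μ) (hY : MemLp Y 2 μ) (h : IndepFun X Y μ)
    (hX0 : ∫ ω, X ω ∂μ = 0) (hY0 : ∫ ω, Y ω ∂μ = 0) :
    ∫ ω, (X - Y) ω ^ 2 ∂μ = ∫ ω, X ω ^ 2 ∂μ + ∫ ω, Y ω ^ 2 ∂μ := by
  have hXY0 : ∫ ω, (X - Y) ω ∂μ = 0 := by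
    rw [integral_sub' (hX.integrable one_le_two) (hY.integrable one_le_two), hX0, hY0, sub_zero]
  rw [← variance_of_integral_eq_zero (hX.sub hY).aemeasurable hXY0,
    ← variance_of_integral_eq_zero hX.aemeasurable hX0,
    ← variance_of_integral_eq_zero hY.aemeasurable hY0, h.variance_sub hX hY]

end ProbabilityTheory.IndepFun

theorem ciInf_add_ciInf_le {ι : Type*} [Nonempty ι] {f g h : ι → ℝ}
    (hf : BddBelow (Set.range f)) (hg : BddBelow (Set.range g)) (hfg : ∀ i, f i + g i ≤ h i) :
    (⨅ i, f i) + ⨅ i, g i ≤ ⨅ i, h i :=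
  le_ciInf fun i => (add_le_add (ciInf_le hf i) (ciInf_le hg i)).trans (hfg i)

section PredictionError

variable {Ω : Type*} {n : ℕ}

def predictionError (X : Fin (n + 1) → Ω → ℝ) (a : Fin n → ℝ) (ω : Ω) : ℝ :=
  X 0 ω - ∑ j, a j * X j.succ ω

theorem predictionError_add (X Y : Fin (n + 1) → Ω → ℝ) (a : Fin n → ℝ) :
    predictionError (X + Y) a = predictionError X a + predictionError Y a := by
  ext ω
  simp only [predictionError, Pi.add_apply, mul_add, Finset.sum_add_distrib]
  ring

theorem predictionError_sub (X Y : Fin (n + 1) → Ω → ℝ) (a : Fin n → ℝ) :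
    predictionError (X - Y) a = predictionError X a - predictionError Y a := by
  ext ω
  simp only [predictionError, Pi.sub_apply, mul_sub, Finset.sum_sub_distrib]
  ring

variable [MeasurableSpace Ω] {μ : Measure Ω}

theorem memLp_predictionError {p : ENNReal} {X : Fin (n + 1) → Ω → ℝ}
    (hX : ∀ i, MemLp (X i) p μ) (a : Fin n → ℝ) : MemLp (predictionError X a) p μ :=
  (hX 0).sub (memLp_finsetSum _ fun j _ => (hX j.succ).const_mul (a j))

theorem integral_predictionError_eq_zero {X : Fin (n + 1) → Ω → ℝ}
    (hX : ∀ i, Integrable (X i) μ) (hX0 : ∀ i, ∫ ω, X i ω ∂μ = 0) (a : Fin n → ℝ) :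
    ∫ ω, predictionError X a ω ∂μ = 0 := by
  have hterm : ∀ j : Fin n, Integrable (fun ω => a j * X j.succ ω) μ :=
    fun j => (hX j.succ).const_mul (a j)
  simp only [predictionError]
  rw [integral_sub (hX 0) (integrable_finsetSum _ fun j _ => hterm j),
    integral_finsetSum _ fun j _ => hterm j]
  simp [integral_const_mul, hX0]

theorem ProbabilityTheory.IndepFun.predictionError {X Y : Fin (n + 1) → Ω → ℝ}
    (h : IndepFun (fun ω i => X i ω) (fun ω i => Y i ω) μ) (a : Fin n → ℝ) :
    IndepFun (predictionError X a) (predictionError Y a) μ := by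
  have hφ : Measurable fun x : Fin (n + 1) → ℝ => x 0 - ∑ j, a j * x j.succ := by fun_prop
  exact h.comp hφ hφ

theorem bddBelow_range_integral_predictionError_sq (X : Fin (n + 1) → Ω → ℝ) :
    BddBelow (Set.range fun a => ∫ ω, predictionError X a ω ^ 2 ∂μ) :=
  ⟨0, by rintro _ ⟨a, rfl⟩; exact integral_nonneg fun ω => sq_nonneg _⟩

end PredictionError

theorem stmt_10_general {Ω : Type*} [MeasurableSpace Ω] (μ : Measure Ω) [IsProbabilityMeasure μ]
    (n : ℕ) (U V : Fin (n + 1) → Ω → ℝ)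
    (hUL2 : ∀ i, MemLp (U i) 2 μ) (hVL2 : ∀ i, MemLp (V i) 2 μ)
    (hUcent : ∀ i, ∫ ω, U i ω ∂μ = 0) (hVcent : ∀ i, ∫ ω, V i ω ∂μ = 0)
    (hindep : IndepFun (fun ω i => U i ω) (fun ω i => V i ω) μ)
    (Z : Fin (n + 1) → Ω → ℝ)
    (hZ : (∀ i ω, Z i ω = U i ω + V i ω) ∨ (∀ i ω, Z i ω = U i ω - V i ω)) :
    (⨅ a : Fin n → ℝ, ∫ ω, (U 0 ω - ∑ j, a j * U j.succ ω) ^ 2 ∂μ)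
      + (⨅ a : Fin n → ℝ, ∫ ω, (V 0 ω - ∑ j, a j * V j.succ ω) ^ 2 ∂μ)
      ≤ ⨅ a : Fin n → ℝ, ∫ ω, (Z 0 ω - ∑ j, a j * Z j.succ ω) ^ 2 ∂μ := by
  refine ciInf_add_ciInf_le (bddBelow_range_integral_predictionError_sq U)
    (bddBelow_range_integral_predictionError_sq V) fun a => le_of_eq ?_
  have hU := memLp_predictionError hUL2 a
  have hV := memLp_predictionError hVL2 a
  have hU0 := integral_predictionError_eq_zero (fun i => (hUL2 i).integrable one_le_two) hUcent a
  have hV0 := integral_predictionError_eq_zero (fun i => (hVL2 i).integrable one_le_two) hVcent a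
  rcases hZ with hZ | hZ
  · obtain rfl : Z = U + V := funext₂ hZ
    have h := (hindep.predictionError a).integral_add_sq hU hV hU0 hV0
    rw [← predictionError_add] at h
    exact h.symm
  · obtain rfl : Z = U - V := funext₂ hZ
    have h := (hindep.predictionError a).integral_sub_sq hU hV hU0 hV0
    rw [← predictionError_sub] at h
    exact h.symm

theorem stmt_10 {Ω : Type*} [MeasurableSpace Ω] (μ : Measure Ω) [IsProbabilityMeasure μ]
    (n : ℕ) (U V : Fin (n + 1) → Ω → ℝ)
    (hUmeas : ∀ i, Measurable (U i)) (hVmeas : ∀ i, Measurable (V i))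
    (hUL2 : ∀ i, MemLp (U i) 2 μ) (hVL2 : ∀ i, MemLp (V i) 2 μ)
    (hUcent : ∀ i, ∫ ω, U i ω ∂μ = 0) (hVcent : ∀ i, ∫ ω, V i ω ∂μ = 0)
    (hUgauss : ∀ a : Fin (n + 1) → ℝ, ∃ v : NNReal,
      Measure.map (fun ω => ∑ i, a i * U i ω) μ = gaussianReal 0 v)
    (hVgauss : ∀ a : Fin (n + 1) → ℝ, ∃ v : NNReal,
      Measure.map (fun ω => ∑ i, a i * V i ω) μ = gaussianReal 0 v)
    (hindep : IndepFun (fun ω i => U i ω) (fun ω i => V i ω) μ)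
    (Z : Fin (n + 1) → Ω → ℝ)
    (hZ : (∀ i ω, Z i ω = U i ω + V i ω) ∨ (∀ i ω, Z i ω = U i ω - V i ω)) :
    (⨅ a : Fin n → ℝ, ∫ ω, (U 0 ω - ∑ j, a j * U j.succ ω) ^ 2 ∂μ)
      + (⨅ a : Fin n → ℝ, ∫ ω, (V 0 ω - ∑ j, a j * V j.succ ω) ^ 2 ∂μ)
      ≤ ⨅ a : Fin n → ℝ, ∫ ω, (Z 0 ω - ∑ j, a j * Z j.succ ω) ^ 2 ∂μ :=
  stmt_10_general μ n U V hUL2 hVL2 hUcent hVcent hindep Z hZ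
end

section
/- Let Z₁, …, Zₙ be centered, linearly independent (as elements of L²) jointly Gaussian random variables, and let g : ℝ → ℝ be a measurable function such that ∫_ℝ g(v) e^{-εv²} dv < ∞ for all ε > 0. Then ∫_{ℝⁿ} g(v₁) exp[-½ Var(Σⱼ vⱼ Zⱼ)] dv₁⋯dvₙ = (2π)^{(n-1)/2} / (det Cov(Z₁,…,Zₙ))^{1/2} · ∫_ℝ g(v/σ₁) e^{-v²/2} dv, where σ₁² = Var(Z₁ | Z₂, …, Zₙ). -/
/-!
One step of a Cholesky factorisation writes the second-moment matrix as `A = R Rᵀ` with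
`R = [[ρ, yᵀ], [0, S]]` and `S` invertible. The substitution `x = Rᵀ v` has Jacobian
`|det R| = √(det A)`, turns `vᵀ A v` into `‖x‖²` and `v₀` into `x₀ / ρ`, so the integral splits
into `n - 1` standard Gaussian integrals and one integral of `g (x₀ / ρ) e^{-x₀²/2}`. On the other
hand `‖Z₀ - ∑_{j > 0} aⱼ Zⱼ‖²_{L²} = ρ² + ‖y - Sᵀ a‖²`, whose infimum is `ρ²`.
-/

open MeasureTheory ProbabilityTheory Matrix

theorem integral_comp_mulVec {ι E : Type*} [Fintype ι] [DecidableEq ι] [NormedAddCommGroup E]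
    [NormedSpace ℝ E] {M : Matrix ι ι ℝ} (hM : M.det ≠ 0) (f : (ι → ℝ) → E) :
    ∫ x, f (M *ᵥ x) = |M.det|⁻¹ • ∫ x, f x := by
  let e : (ι → ℝ) ≃L[ℝ] (ι → ℝ) :=
    (M.toLinearEquiv' (M.invertibleOfIsUnitDet hM.isUnit)).toContinuousLinearEquiv
  have hmap : Measure.map e volume = ENNReal.ofReal |M.det|⁻¹ • volume := by
    rw [← abs_inv, ← Real.map_matrix_volume_pi_eq_smul_volume_pi hM]
    rfl
  have := integral_map_equiv e.toHomeomorph.toMeasurableEquiv f (μ := volume)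
  rw [show ⇑e.toHomeomorph.toMeasurableEquiv = ⇑e from rfl, hmap, integral_smul_measure,
    ENNReal.toReal_ofReal (inv_nonneg.2 (abs_nonneg _))] at this
  exact this.symm

theorem integral_exp_neg_sq_div_two : ∫ t : ℝ, Real.exp (-t ^ 2 / 2) = √(2 * Real.pi) := by
  simpa [neg_div, div_eq_inv_mul, mul_comm] using integral_gaussian (1 / 2)

theorem integral_mul_exp_neg_half_dotProduct_self (m : ℕ) (f : ℝ → ℝ) :
    ∫ x : Fin (m + 1) → ℝ, f (x 0) * Real.exp (-(1 / 2) * (x ⬝ᵥ x))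
      = √(2 * Real.pi) ^ m * ∫ t, f t * Real.exp (-t ^ 2 / 2) := by
  have hprod : ∀ x : Fin (m + 1) → ℝ, f (x 0) * Real.exp (-(1 / 2) * (x ⬝ᵥ x))
      = ∏ i, (Fin.cons (fun t => f t * Real.exp (-t ^ 2 / 2)) fun _ t => Real.exp (-t ^ 2 / 2) :
          Fin (m + 1) → ℝ → ℝ) i (x i) := by
    intro x
    simp only [dotProduct, Fin.prod_univ_succ, Fin.cons_zero, Fin.cons_succ, Fin.sum_univ_succ,
      mul_add, Finset.mul_sum, Real.exp_add, Real.exp_sum]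
    ring_nf
  simp_rw [hprod]
  rw [integral_fintype_prod_volume_eq_prod, Fin.prod_univ_succ]
  simp [integral_exp_neg_sq_div_two, mul_comm]

namespace Matrix

variable {α : Type*} [CommRing α] {m : ℕ}

/-- The block matrix `[[ρ, yᵀ], [0, S]]`. -/
def upperBlock (ρ : α) (y : Fin m → α) (S : Matrix (Fin m) (Fin m) α) :
    Matrix (Fin (m + 1)) (Fin (m + 1)) α :=
  of (Fin.cons (Fin.cons ρ y) fun i => Fin.cons 0 (S i))

theorem upperBlock_transpose_mulVec_cons (ρ : α) (y : Fin m → α) (S : Matrix (Fin m) (Fin m) α)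
    (t : α) (x : Fin m → α) :
    (upperBlock ρ y S)ᵀ *ᵥ Fin.cons t x = Fin.cons (ρ * t) (t • y + Sᵀ *ᵥ x) := by
  ext i
  cases i using Fin.cases <;>
    simp [upperBlock, mulVec, dotProduct, Fin.sum_univ_succ, mul_comm]

theorem dotProduct_mulVec_eq_sum_sum {n : Type*} [Fintype n] (A : Matrix n n α) (v : n → α) :
    v ⬝ᵥ A *ᵥ v = ∑ i, ∑ j, v i * v j * A i j := by
  simp only [dotProduct, mulVec, Finset.mul_sum]
  exact Finset.sum_congr rfl fun i _ => Finset.sum_congr rfl fun j _ => by ring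

theorem sub_sum_erase_zero_eq_sum_cons {β : Type*} (Z : Fin (m + 1) → β → α)
    (a : Fin (m + 1) → α) (ω : β) :
    Z 0 ω - ∑ j ∈ Finset.univ.erase 0, a j * Z j ω
      = ∑ i, (Fin.cons 1 (-Fin.tail a) : Fin (m + 1) → α) i * Z i ω := by
  simp [Fin.sum_univ_succ, Finset.sum_erase_eq_sub, sub_eq_add_neg, Fin.tail]

theorem dotProduct_mul_transpose_mulVec {n : Type*} [Fintype n] (R : Matrix n n α) (w : n → α) :
    w ⬝ᵥ (R * Rᵀ) *ᵥ w = (Rᵀ *ᵥ w) ⬝ᵥ (Rᵀ *ᵥ w) := by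
  rw [← mulVec_mulVec, dotProduct_mulVec, mulVec_transpose]

/-- With `ρ = 0` this computes the quadratic form of `A` before `0 < A 0 0 - y ⬝ᵥ y` is known. -/
theorem upperBlock_mul_transpose_add_single {A : Matrix (Fin (m + 1)) (Fin (m + 1)) α}
    {y : Fin m → α} {S : Matrix (Fin m) (Fin m) α} (hA : A.IsSymm)
    (hD : A.submatrix Fin.succ Fin.succ = S * Sᵀ) (hb : (fun j => A 0 j.succ) = S *ᵥ y) (ρ : α) :
    upperBlock ρ y S * (upperBlock ρ y S)ᵀ + single 0 0 (A 0 0 - y ⬝ᵥ y - ρ ^ 2) = A := by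
  ext i j
  cases i using Fin.cases with
  | zero =>
    cases j using Fin.cases with
    | zero =>
      simp only [upperBlock, dotProduct, add_apply, mul_apply, of_apply, Fin.cons_zero,
        transpose_apply, Fin.sum_univ_succ, Fin.cons_succ, single_apply_same]
      ring
    | succ j =>
      simp [upperBlock, mul_apply, Fin.sum_univ_succ, (Fin.succ_ne_zero j).symm, congrFun hb j,
        mulVec, dotProduct, mul_comm]
  | succ i =>
    cases j using Fin.cases with
    | zero =>
      simp [upperBlock, mul_apply, Fin.sum_univ_succ, (Fin.succ_ne_zero i).symm, hA.apply 0 i.succ,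
        congrFun hb i, mulVec, dotProduct]
    | succ j =>
      simp [upperBlock, mul_apply, Fin.sum_univ_succ, (Fin.succ_ne_zero i).symm,
        show A i.succ j.succ = _ from congrFun₂ hD i j]

theorem cons_one_neg_dotProduct_mulVec {A : Matrix (Fin (m + 1)) (Fin (m + 1)) α}
    {y : Fin m → α} {S : Matrix (Fin m) (Fin m) α} (hA : A.IsSymm)
    (hD : A.submatrix Fin.succ Fin.succ = S * Sᵀ) (hb : (fun j => A 0 j.succ) = S *ᵥ y)
    (x : Fin m → α) :
    Fin.cons 1 (-x) ⬝ᵥ A *ᵥ Fin.cons 1 (-x)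
      = (A 0 0 - y ⬝ᵥ y) + (y - Sᵀ *ᵥ x) ⬝ᵥ (y - Sᵀ *ᵥ x) := by
  conv_lhs => rw [← upperBlock_mul_transpose_add_single hA hD hb 0]
  rw [add_mulVec, dotProduct_add, dotProduct_mul_transpose_mulVec,
    upperBlock_transpose_mulVec_cons, single_mulVec_eq, dotProduct_smul, dotProduct_single]
  simp only [dotProduct, Fin.sum_univ_succ, Fin.cons_zero, Fin.cons_succ]
  simp only [mul_one, mul_zero, one_smul, mulVec_neg, Pi.add_apply, Pi.neg_apply, zero_add,
    sub_eq_add_neg, ne_eq, OfNat.ofNat_ne_zero, not_false_eq_true, zero_pow, neg_zero, add_zero,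
    smul_eq_mul, Pi.sub_apply]
  ring

open scoped MatrixOrder in
theorem PosDef.exists_eq_upperBlock_mul_transpose {A : Matrix (Fin (m + 1)) (Fin (m + 1)) ℝ}
    (hA : A.PosDef) : ∃ (ρ : ℝ) (y : Fin m → ℝ) (S : Matrix (Fin m) (Fin m) ℝ),
      0 < ρ ∧ IsUnit S ∧ A = upperBlock ρ y S * (upperBlock ρ y S)ᵀ := by
  have hsymm : A.IsSymm := isHermitian_iff_isSymm.1 hA.isHermitian
  obtain ⟨B, hB, hBB⟩ := CStarAlgebra.isStrictlyPositive_iff_eq_star_mul_self.1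
    (hA.submatrix (Fin.succ_injective m)).isStrictlyPositive
  have hS : IsUnit Bᵀ := (isUnit_transpose B).2 hB
  have hD : A.submatrix Fin.succ Fin.succ = Bᵀ * Bᵀᵀ := by
    rw [hBB, star_eq_conjTranspose, conjTranspose_eq_transpose_of_trivial, transpose_transpose]
  obtain ⟨y, hb⟩ := mulVec_surjective_iff_isUnit.2 hS fun j => A 0 j.succ
  obtain ⟨x, hx⟩ := mulVec_surjective_iff_isUnit.2 ((isUnit_transpose _).2 hS) y
  have hσ : 0 < A 0 0 - y ⬝ᵥ y := by
    have hw : (Fin.cons 1 (-x) : Fin (m + 1) → ℝ) ≠ 0 := fun h => by simpa using congrFun h 0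
    have := hA.dotProduct_mulVec_pos hw
    rwa [star_trivial, cons_one_neg_dotProduct_mulVec hsymm hD hb.symm, hx, sub_self,
      zero_dotProduct, add_zero] at this
  refine ⟨√(A 0 0 - y ⬝ᵥ y), y, Bᵀ, Real.sqrt_pos.2 hσ, hS, ?_⟩
  conv_lhs => rw [← upperBlock_mul_transpose_add_single hsymm hD hb.symm √(A 0 0 - y ⬝ᵥ y)]
  rw [Real.sq_sqrt hσ.le, sub_self, single_zero, add_zero]

theorem isLeast_cons_one_neg_dotProduct_mulVec_upperBlock {ρ : ℝ} {y : Fin m → ℝ}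
    {S : Matrix (Fin m) (Fin m) ℝ} (hS : IsUnit S) :
    IsLeast (Set.range fun x => Fin.cons 1 (-x) ⬝ᵥ
      (upperBlock ρ y S * (upperBlock ρ y S)ᵀ) *ᵥ Fin.cons 1 (-x)) (ρ ^ 2) := by
  have hq : ∀ x, Fin.cons 1 (-x) ⬝ᵥ (upperBlock ρ y S * (upperBlock ρ y S)ᵀ) *ᵥ Fin.cons 1 (-x)
      = ρ ^ 2 + (y - Sᵀ *ᵥ x) ⬝ᵥ (y - Sᵀ *ᵥ x) := by
    intro x
    rw [dotProduct_mul_transpose_mulVec, upperBlock_transpose_mulVec_cons]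
    simp [dotProduct, Fin.sum_univ_succ, sub_eq_add_neg, mulVec_neg, sq]
  obtain ⟨x, hx⟩ := mulVec_surjective_iff_isUnit.2 ((isUnit_transpose S).2 hS) y
  refine ⟨⟨x, by simp [hq, hx]⟩, ?_⟩
  rintro _ ⟨x, rfl⟩
  simpa [hq] using dotProduct_self_star_nonneg (y - Sᵀ *ᵥ x)

theorem integral_mul_exp_neg_half_dotProduct_upperBlock {ρ : ℝ} {y : Fin m → ℝ}
    {S : Matrix (Fin m) (Fin m) ℝ} (hρ : ρ ≠ 0) (hR : (upperBlock ρ y S).det ≠ 0) (g : ℝ → ℝ) :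
    ∫ v, g (v 0) * Real.exp (-(1 / 2) * (v ⬝ᵥ (upperBlock ρ y S * (upperBlock ρ y S)ᵀ) *ᵥ v))
      = √(2 * Real.pi) ^ m / |(upperBlock ρ y S).det|
          * ∫ t, g (t / ρ) * Real.exp (-t ^ 2 / 2) := by
  have hcomp : ∀ v : Fin (m + 1) → ℝ,
      g (v 0) * Real.exp (-(1 / 2) * (v ⬝ᵥ (upperBlock ρ y S * (upperBlock ρ y S)ᵀ) *ᵥ v))
        = (fun x => g (x 0 / ρ) * Real.exp (-(1 / 2) * (x ⬝ᵥ x))) ((upperBlock ρ y S)ᵀ *ᵥ v) := by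
    intro v
    rw [dotProduct_mul_transpose_mulVec, ← Fin.cons_self_tail v, upperBlock_transpose_mulVec_cons]
    simp [hρ]
  rw [funext hcomp, integral_comp_mulVec (by rwa [det_transpose])
      (fun x => g (x 0 / ρ) * Real.exp (-(1 / 2) * (x ⬝ᵥ x))),
    integral_mul_exp_neg_half_dotProduct_self m fun t => g (t / ρ), det_transpose, smul_eq_mul]
  ring

end Matrix

section L2

variable {Ω ι : Type*} [MeasurableSpace Ω] {μ : Measure Ω} {Z : ι → Ω → ℝ}

theorem inner_toLp_toLp {f g : Ω → ℝ} (hf : MemLp f 2 μ) (hg : MemLp g 2 μ) :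
    inner ℝ (hf.toLp f) (hg.toLp g) = ∫ ω, f ω * g ω ∂μ := by
  rw [L2.inner_def]
  refine integral_congr_ae ?_
  filter_upwards [hf.coeFn_toLp, hg.coeFn_toLp] with ω hfω hgω
  rw [hfω, hgω, Real.inner_apply, mul_comm]

theorem gram_toLp (hZ : ∀ i, MemLp (Z i) 2 μ) :
    gram ℝ (fun i => (hZ i).toLp (Z i)) = of fun i j => ∫ ω, Z i ω * Z j ω ∂μ := by
  ext i j
  rw [gram_apply, inner_toLp_toLp, of_apply]

variable [Fintype ι]

theorem memLp_sum_mul (hZ : ∀ i, MemLp (Z i) 2 μ) (w : ι → ℝ) :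
    MemLp (fun ω => ∑ i, w i * Z i ω) 2 μ :=
  memLp_finsetSum _ fun i _ => (hZ i).const_mul (w i)

theorem sum_smul_toLp (hZ : ∀ i, MemLp (Z i) 2 μ) (w : ι → ℝ) :
    ∑ i, w i • (hZ i).toLp (Z i) = (memLp_sum_mul hZ w).toLp fun ω => ∑ i, w i * Z i ω := by
  refine Lp.ext ?_
  filter_upwards [Lp.coeFn_finsetSum Finset.univ fun i => w i • (hZ i).toLp (Z i),
    (memLp_sum_mul hZ w).coeFn_toLp,
    Filter.eventually_all.2 fun i => Lp.coeFn_smul (w i) ((hZ i).toLp (Z i)),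
    Filter.eventually_all.2 fun i => (hZ i).coeFn_toLp] with ω hsum hlin hsmul hZω
  rw [hsum, hlin, Finset.sum_apply]
  exact Finset.sum_congr rfl fun i _ => by rw [hsmul i, Pi.smul_apply, hZω i, smul_eq_mul]

theorem integral_sq_sum_mul (hZ : ∀ i, MemLp (Z i) 2 μ) (w : ι → ℝ) :
    ∫ ω, (∑ i, w i * Z i ω) ^ 2 ∂μ = w ⬝ᵥ gram ℝ (fun i => (hZ i).toLp (Z i)) *ᵥ w := by
  have := star_dotProduct_gram_mulVec (𝕜 := ℝ) (fun i => (hZ i).toLp (Z i)) w w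
  rw [star_trivial] at this
  rw [this, sum_smul_toLp, inner_toLp_toLp]
  simp only [sq]

theorem linearIndependent_toLp (hZ : ∀ i, MemLp (Z i) 2 μ)
    (hli : ∀ w : ι → ℝ, (∀ᵐ ω ∂μ, ∑ i, w i * Z i ω = 0) → w = 0) :
    LinearIndependent ℝ fun i => (hZ i).toLp (Z i) := by
  refine Fintype.linearIndependent_iff.2 fun w hw => congrFun (hli w ?_)
  rw [sum_smul_toLp] at hw
  filter_upwards [(memLp_sum_mul hZ w).coeFn_toLp, Lp.eq_zero_iff_ae_eq_zero.1 hw] with ω h1 h2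
  rw [← h1, h2, Pi.zero_apply]

end L2

theorem stmt_11_general {Ω : Type*} [MeasurableSpace Ω] (μ : Measure Ω)
    (n : ℕ) (hn : 1 ≤ n) (Z : Fin n → Ω → ℝ)
    (hL2 : ∀ i, MemLp (Z i) 2 μ)
    (hli : ∀ a : Fin n → ℝ, (∀ᵐ ω ∂μ, ∑ i, a i * Z i ω = 0) → a = 0)
    (g : ℝ → ℝ) :
    (∫ v : Fin n → ℝ, g (v ⟨0, hn⟩) *
        Real.exp (-(1 / 2) * ∑ i, ∑ j, v i * v j * ∫ ω, Z i ω * Z j ω ∂μ))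
      = (2 * Real.pi) ^ (((n : ℝ) - 1) / 2)
          / Real.sqrt (Matrix.of fun i j => ∫ ω, Z i ω * Z j ω ∂μ).det
        * ∫ v : ℝ,
            g (v / Real.sqrt (⨅ a : Fin n → ℝ,
                ∫ ω, (Z ⟨0, hn⟩ ω
                  - ∑ j ∈ Finset.univ.erase ⟨0, hn⟩, a j * Z j ω) ^ 2 ∂μ))
              * Real.exp (-v ^ 2 / 2) := by
  obtain ⟨m, rfl⟩ := Nat.exists_eq_add_one.2 hn
  have hquad : ∀ v : Fin (m + 1) → ℝ, ∑ i, ∑ j, v i * v j * ∫ ω, Z i ω * Z j ω ∂μ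
      = v ⬝ᵥ (of fun i j => ∫ ω, Z i ω * Z j ω ∂μ) *ᵥ v :=
    fun v => (dotProduct_mulVec_eq_sum_sum _ v).symm
  simp_rw [show (⟨0, hn⟩ : Fin (m + 1)) = 0 from rfl, hquad, sub_sum_erase_zero_eq_sum_cons,
    integral_sq_sum_mul hL2, ← gram_toLp hL2]
  have hA := posDef_gram_of_linearIndependent (linearIndependent_toLp hL2 hli)
  obtain ⟨ρ, y, S, hρ, hS, hAR⟩ := hA.exists_eq_upperBlock_mul_transpose
  have hinf : ⨅ a : Fin (m + 1) → ℝ, Fin.cons 1 (-Fin.tail a) ⬝ᵥ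
      (upperBlock ρ y S * (upperBlock ρ y S)ᵀ) *ᵥ Fin.cons 1 (-Fin.tail a) = ρ ^ 2 := by
    have htail : Function.Surjective (Fin.tail : (Fin (m + 1) → ℝ) → Fin m → ℝ) :=
      fun x => ⟨Fin.cons 0 x, Fin.tail_cons _ _⟩
    have hleast := isLeast_cons_one_neg_dotProduct_mulVec_upperBlock (ρ := ρ) (y := y) hS
    rw [← htail.range_comp] at hleast
    exact hleast.csInf_eq
  have hdet : √(upperBlock ρ y S * (upperBlock ρ y S)ᵀ).det = |(upperBlock ρ y S).det| := by
    rw [det_mul, det_transpose, ← sq, Real.sqrt_sq_eq_abs]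
  have hR : (upperBlock ρ y S).det ≠ 0 := by
    rw [← abs_pos, ← hdet, ← hAR]
    exact Real.sqrt_pos.2 hA.det_pos
  rw [hAR, hinf, Real.sqrt_sq hρ.le, hdet, Nat.cast_add_one, add_sub_cancel_right,
    Real.rpow_div_two_eq_sqrt _ (by positivity), Real.rpow_natCast]
  exact integral_mul_exp_neg_half_dotProduct_upperBlock hρ.ne' hR g

theorem stmt_11 {Ω : Type*} [MeasurableSpace Ω] (μ : Measure Ω) [IsProbabilityMeasure μ]
    (n : ℕ) (hn : 1 ≤ n) (Z : Fin n → Ω → ℝ)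
    (hmeas : ∀ i, Measurable (Z i))
    (hL2 : ∀ i, MemLp (Z i) 2 μ)
    (hcent : ∀ i, ∫ ω, Z i ω ∂μ = 0)
    (hgauss : ∀ a : Fin n → ℝ, ∃ v : NNReal,
      Measure.map (fun ω => ∑ i, a i * Z i ω) μ = gaussianReal 0 v)
    (hli : ∀ a : Fin n → ℝ, (∀ᵐ ω ∂μ, ∑ i, a i * Z i ω = 0) → a = 0)
    (g : ℝ → ℝ) (hg : Measurable g)
    (hint : ∀ ε : ℝ, 0 < ε → Integrable (fun v : ℝ => g v * Real.exp (-(ε * v ^ 2)))) :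
    (∫ v : Fin n → ℝ, g (v ⟨0, hn⟩) *
        Real.exp (-(1 / 2) * ∑ i, ∑ j, v i * v j * ∫ ω, Z i ω * Z j ω ∂μ))
      = (2 * Real.pi) ^ (((n : ℝ) - 1) / 2)
          / Real.sqrt (Matrix.of fun i j => ∫ ω, Z i ω * Z j ω ∂μ).det
        * ∫ v : ℝ,
            g (v / Real.sqrt (⨅ a : Fin n → ℝ,
                ∫ ω, (Z ⟨0, hn⟩ ω
                  - ∑ j ∈ Finset.univ.erase ⟨0, hn⟩, a j * Z j ω) ^ 2 ∂μ))
              * Real.exp (-v ^ 2 / 2) :=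
  stmt_11_general μ n hn Z hL2 hli g
end

section
/- For all u₁, …, uₙ ∈ ℝ^d, all x, y ∈ ℝ^d, and γ ∈ (0,1], ∏_{j=1}^n |e^{-i⟨uⱼ,x⟩} - e^{-i⟨uⱼ,y⟩}| ≤ 2^{(1-γ)n} |x-y|^{nγ} · Σ' ∏_{j=1}^n |u_{j,k_j}|^γ, where the sum Σ' is over all sequences (k₁,…,kₙ) ∈ {1,…,d}ⁿ and u_{j,k} denotes the k-th coordinate of uⱼ. -/
/-!
Each factor satisfies `|e^{ia} - e^{ib}| ≤ min 2 |a - b|`, and interpolating between the two bounds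
gives `2^{1-γ} |a - b|^γ`. With `a - b = ⟨u, y - x⟩` and `|⟨u, v⟩| ≤ |v| ∑ₖ |uₖ|`, subadditivity of
`t ↦ t^γ` bounds the factor by `2^{1-γ} |x - y|^γ ∑ₖ |uₖ|^γ`; multiplying out the product of these
sums gives the sum over all index sequences `k`.
-/

open RealInnerProductSpace

namespace Real

theorem rpow_sum_le_sum_rpow {ι : Type*} (s : Finset ι) {f : ι → ℝ} (hf : ∀ i ∈ s, 0 ≤ f i)
    {p : ℝ} (hp₀ : 0 < p) (hp₁ : p ≤ 1) : (∑ i ∈ s, f i) ^ p ≤ ∑ i ∈ s, f i ^ p :=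
  Finset.le_sum_of_subadditive_on_pred (· ^ p) (0 ≤ ·) (zero_rpow hp₀.ne').le
    (fun _ _ ha hb ↦ rpow_add_le_add_rpow ha hb hp₀.le hp₁) (fun _ _ ↦ add_nonneg) f hf

theorem le_rpow_mul_rpow_of_le_of_le {x a b γ : ℝ} (hx : 0 ≤ x) (ha : x ≤ a) (hb : x ≤ b)
    (hγ₀ : 0 ≤ γ) (hγ₁ : γ ≤ 1) : x ≤ a ^ (1 - γ) * b ^ γ :=
  calc x = x ^ (1 - γ) * x ^ γ := by rw [← rpow_add' hx (by simp), sub_add_cancel, rpow_one]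
    _ ≤ a ^ (1 - γ) * b ^ γ := by
      have ha₀ := hx.trans ha
      gcongr

end Real

theorem abs_inner_le_norm_mul_sum_abs {ι : Type*} [Fintype ι] (u v : EuclideanSpace ℝ ι) :
    |⟪u, v⟫| ≤ ‖v‖ * ∑ k, |u k| :=
  calc |⟪u, v⟫| = |∑ k, u k * v k| := by simp [PiLp.inner_apply, mul_comm]
    _ ≤ ∑ k, |u k| * |v k| := by
      simpa only [abs_mul] using Finset.abs_sum_le_sum_abs (fun k ↦ u k * v k) Finset.univ
    _ ≤ ∑ k, |u k| * ‖v‖ := by gcongr with k; exact PiLp.norm_apply_le v k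
    _ = ‖v‖ * ∑ k, |u k| := by rw [Finset.mul_sum]; simp only [mul_comm]

namespace Complex

theorem norm_exp_ofReal_mul_I_sub_exp_ofReal_mul_I_le (a b : ℝ) :
    ‖exp (a * I) - exp (b * I)‖ ≤ 2 ∧ ‖exp (a * I) - exp (b * I)‖ ≤ |a - b| := by
  constructor
  · calc ‖exp (a * I) - exp (b * I)‖ ≤ ‖exp (a * I)‖ + ‖exp (b * I)‖ := norm_sub_le _ _
      _ = 2 := by rw [norm_exp_ofReal_mul_I, norm_exp_ofReal_mul_I]; norm_num
  · have hfactor : exp (a * I) - exp (b * I) = exp (b * I) * (exp (I * ↑(a - b)) - 1) := by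
      rw [mul_sub, mul_one, ← exp_add]
      push_cast
      ring_nf
    rw [hfactor, norm_mul, norm_exp_ofReal_mul_I, one_mul, ← Real.norm_eq_abs]
    exact Real.norm_exp_I_mul_ofReal_sub_one_le

theorem norm_exp_ofReal_mul_I_sub_exp_ofReal_mul_I_le_rpow (a b : ℝ) {γ : ℝ} (hγ₀ : 0 ≤ γ)
    (hγ₁ : γ ≤ 1) : ‖exp (a * I) - exp (b * I)‖ ≤ 2 ^ (1 - γ) * |a - b| ^ γ :=
  let ⟨h₂, hab⟩ := norm_exp_ofReal_mul_I_sub_exp_ofReal_mul_I_le a b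
  Real.le_rpow_mul_rpow_of_le_of_le (norm_nonneg _) h₂ hab hγ₀ hγ₁

end Complex

theorem norm_exp_neg_inner_mul_I_sub_le {ι : Type*} [Fintype ι] (u x y : EuclideanSpace ℝ ι)
    {γ : ℝ} (hγ₀ : 0 < γ) (hγ₁ : γ ≤ 1) :
    ‖Complex.exp (-(⟪u, x⟫ : ℝ) * Complex.I) - Complex.exp (-(⟪u, y⟫ : ℝ) * Complex.I)‖
      ≤ 2 ^ (1 - γ) * (‖x - y‖ ^ γ * ∑ k, |u k| ^ γ) := by
  have hphase : |-⟪u, x⟫ - -⟪u, y⟫| = |⟪u, x - y⟫| := by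
    rw [inner_sub_right, neg_sub_neg, abs_sub_comm]
  have hinner : |⟪u, x - y⟫| ^ γ ≤ ‖x - y‖ ^ γ * ∑ k, |u k| ^ γ :=
    calc |⟪u, x - y⟫| ^ γ ≤ (‖x - y‖ * ∑ k, |u k|) ^ γ := by
          gcongr; exact abs_inner_le_norm_mul_sum_abs u (x - y)
      _ = ‖x - y‖ ^ γ * (∑ k, |u k|) ^ γ := by
          rw [Real.mul_rpow (norm_nonneg _) (by positivity)]
      _ ≤ ‖x - y‖ ^ γ * ∑ k, |u k| ^ γ := by
          gcongr
          exact Real.rpow_sum_le_sum_rpow _ (fun k _ ↦ abs_nonneg (u k)) hγ₀ hγ₁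
  have h := Complex.norm_exp_ofReal_mul_I_sub_exp_ofReal_mul_I_le_rpow (-⟪u, x⟫) (-⟪u, y⟫)
    hγ₀.le hγ₁
  push_cast at h
  rw [hphase] at h
  exact h.trans (by gcongr)

theorem stmt_15 (d n : ℕ) (γ : ℝ) (hγ : γ ∈ Set.Ioc (0:ℝ) 1)
    (u : Fin n → EuclideanSpace ℝ (Fin d)) (x y : EuclideanSpace ℝ (Fin d)) :
    (∏ j, ‖
        (Complex.exp (-(⟪u j, x⟫ : ℝ) * Complex.I)
          - Complex.exp (-(⟪u j, y⟫ : ℝ) * Complex.I))‖)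
      ≤ 2 ^ ((1 - γ) * n) * ‖x - y‖ ^ ((n : ℝ) * γ)
          * ∑ k : Fin n → Fin d, ∏ j, |u j (k j)| ^ γ := by
  obtain ⟨hγ₀, hγ₁⟩ := hγ
  calc _ ≤ ∏ j, 2 ^ (1 - γ) * (‖x - y‖ ^ γ * ∑ k, |u j k| ^ γ) :=
        Finset.prod_le_prod (fun _ _ ↦ norm_nonneg _)
          (fun j _ ↦ norm_exp_neg_inner_mul_I_sub_le (u j) x y hγ₀ hγ₁)
    _ = (2 ^ (1 - γ)) ^ n * (‖x - y‖ ^ γ) ^ n * ∏ j, ∑ k, |u j k| ^ γ := by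
        simp only [Finset.prod_mul_distrib, Finset.prod_const, Finset.card_univ,
          Fintype.card_fin, mul_assoc]
    _ = _ := by
        rw [Finset.prod_univ_sum, Fintype.piFinset_univ, ← Real.rpow_natCast,
          ← Real.rpow_mul zero_le_two, ← Real.rpow_natCast, ← Real.rpow_mul (norm_nonneg _),
          mul_comm γ]
end
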